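/- arXiv:2512.16787 — 8 statements merged into one kernel-verified Lean document; each statement's English description precedes it below -/
import Mathlib

section
/- Let F = diag(f₁,f₂,f₃) with 0 < f₁ < f₂ < f₃ and f₁+f₂+f₃ = 1, and let G = diag(g₁,g₂,g₃) with 0 < g₁ ≤ g₂ ≤ g₃ and g₁+g₂+g₃ = 1. If there exist R ∈ SO(3), a unit vector n ∈ ℝ³ and a real number λ ≠ 1 such that Rᵀ G R = λ F + (1−λ) n⊗n, then λ ∈ A(F,G). (First half of Lemma 2.5.) -/
open Matrix Set

noncomputable section

/-- `R` is a real 3×3 rotation matrix (element of SO(3)). -/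
def IsSO3 (R : Matrix (Fin 3) (Fin 3) ℝ) : Prop := Rᵀ * R = 1 ∧ R.det = 1

/-- The rank-one matrix `n ⊗ n = (nᵢ nⱼ)`. -/
def outer (n : Fin 3 → ℝ) : Matrix (Fin 3) (Fin 3) ℝ := Matrix.vecMulVec n n

/-- `n` is a unit vector of `ℝ³`. -/
def unitVec (n : Fin 3 → ℝ) : Prop := n 0 ^ 2 + n 1 ^ 2 + n 2 ^ 2 = 1

/-- `α₋(F,G) = max(g₁/f₂, g₂/f₃)`. -/
def alphaMinus (f1 f2 f3 g1 g2 g3 : ℝ) : ℝ := max (g1 / f2) (g2 / f3)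

/-- `α₊(F,G) = min(g₁/f₁, g₂/f₂, g₃/f₃)`. -/
def alphaPlus (f1 f2 f3 g1 g2 g3 : ℝ) : ℝ := min (g1 / f1) (min (g2 / f2) (g3 / f3))

/-- `β₋(F,G) = max(g₁/f₁, g₂/f₂, g₃/f₃)`. -/
def betaMinus (f1 f2 f3 g1 g2 g3 : ℝ) : ℝ := max (g1 / f1) (max (g2 / f2) (g3 / f3))

/-- `β₊(F,G) = min(g₂/f₁, g₃/f₂)`. -/
def betaPlus (f1 f2 f3 g1 g2 g3 : ℝ) : ℝ := min (g2 / f1) (g3 / f2)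

/-- `A(F,G) = ([α₋,α₊] ∪ [β₋,β₊]) \ {1}` in terms of the ordered eigenvalues. -/
def setA (f1 f2 f3 g1 g2 g3 : ℝ) : Set ℝ :=
  (Set.Icc (alphaMinus f1 f2 f3 g1 g2 g3) (alphaPlus f1 f2 f3 g1 g2 g3) ∪
    Set.Icc (betaMinus f1 f2 f3 g1 g2 g3) (betaPlus f1 f2 f3 g1 g2 g3)) \ {1}

/-- Second elementary symmetric invariant `i₂(M) = ((tr M)² − tr(M²))/2`. -/
def i2 (M : Matrix (Fin 3) (Fin 3) ℝ) : ℝ := (Matrix.trace M ^ 2 - Matrix.trace (M * M)) / 2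

/-- Third elementary symmetric invariant `i₃(M) = det M`. -/
def i3 (M : Matrix (Fin 3) (Fin 3) ℝ) : ℝ := M.det

/-- `η(λ,t) = λ/(λ + t(1−λ))`. -/
def etaFun (lam t : ℝ) : ℝ := lam / (lam + t * (1 - lam))

/-- The one-parameter family `M(t) = η(λ,t) F + (1 − η(λ,t)) n⊗n`. -/
def Mcurve (F : Matrix (Fin 3) (Fin 3) ℝ) (n : Fin 3 → ℝ) (lam t : ℝ) :
    Matrix (Fin 3) (Fin 3) ℝ :=
  etaFun lam t • F + (1 - etaFun lam t) • outer n

/-- The quadratic `b(x) = 6 s₂ x² + (s₁s₃ − 3s₂ − 4s₂²) x + 2 s₂²`. -/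
def bpoly (s1 s2 s3 x : ℝ) : ℝ :=
  6 * s2 * x ^ 2 + (s1 * s3 - 3 * s2 - 4 * s2 ^ 2) * x + 2 * s2 ^ 2

/-!
Conjugation by `R` preserves the characteristic polynomial, so
`q(x) = (g₁ - x)(g₂ - x)(g₃ - x)` is the characteristic polynomial of the rank-one update
`λF + (1 - λ) n⊗n`. Evaluated at the eigenvalues `λfᵢ` of `λF` it equals
`(1 - λ) nᵢ² ∏_{j ≠ i} (λfⱼ - λfᵢ)`, so its signs at `λf₁ < λf₂ < λf₃` alternate. For the cubic `q`
this forces the interlacing `λf₁ ≤ g₁ ≤ λf₂ ≤ g₂ ≤ λf₃ ≤ g₃` when `λ < 1` and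
`g₁ ≤ λf₁ ≤ g₂ ≤ λf₂ ≤ g₃ ≤ λf₃` when `λ > 1`; dividing by the `fᵢ` gives `[α₋, α₊]`, resp.
`[β₋, β₊]`.
-/

def Interlaces (a₁ a₂ a₃ b₁ b₂ b₃ : ℝ) : Prop :=
  a₁ ≤ b₁ ∧ b₁ ≤ a₂ ∧ a₂ ≤ b₂ ∧ b₂ ≤ a₃ ∧ a₃ ≤ b₃

section Cubic

variable {g₁ g₂ g₃ x : ℝ}

lemma cubic_pos_of_lt_left (hg₁₂ : g₁ ≤ g₂) (hg₂₃ : g₂ ≤ g₃) (hx : x < g₁) :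
    0 < (g₁ - x) * (g₂ - x) * (g₃ - x) :=
  mul_pos (mul_pos (by linarith) (by linarith)) (by linarith)

lemma cubic_neg_of_mem_Ioo_left (hg₂₃ : g₂ ≤ g₃) (hx₁ : g₁ < x) (hx₂ : x < g₂) :
    (g₁ - x) * (g₂ - x) * (g₃ - x) < 0 :=
  mul_neg_of_neg_of_pos (mul_neg_of_neg_of_pos (by linarith) (by linarith)) (by linarith)

lemma cubic_pos_of_mem_Ioo_right (hg₁₂ : g₁ ≤ g₂) (hx₂ : g₂ < x) (hx₃ : x < g₃) :
    0 < (g₁ - x) * (g₂ - x) * (g₃ - x) :=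
  mul_pos (mul_pos_of_neg_of_neg (by linarith) (by linarith)) (by linarith)

lemma cubic_neg_of_gt_right (hg₁₂ : g₁ ≤ g₂) (hg₂₃ : g₂ ≤ g₃) (hx : g₃ < x) :
    (g₁ - x) * (g₂ - x) * (g₃ - x) < 0 :=
  mul_neg_of_pos_of_neg (mul_pos_of_neg_of_neg (by linarith) (by linarith)) (by linarith)

end Cubic

section RankOneUpdate

variable {a₁ a₂ a₃ g₁ g₂ g₃ s w₁ w₂ w₃ : ℝ}

/-- A rank-one update `diag(a) + s vvᵀ` has characteristic polynomial of this shape, with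
`wᵢ = vᵢ²`. -/
def IsRankOneUpdateCharpoly (a₁ a₂ a₃ g₁ g₂ g₃ s w₁ w₂ w₃ : ℝ) : Prop :=
  ∀ x, (g₁ - x) * (g₂ - x) * (g₃ - x) = (a₁ - x) * (a₂ - x) * (a₃ - x) +
    s * (w₁ * ((a₂ - x) * (a₃ - x)) + w₂ * ((a₁ - x) * (a₃ - x)) + w₃ * ((a₁ - x) * (a₂ - x)))

namespace IsRankOneUpdateCharpoly

lemma cubic_eq_left (hq : IsRankOneUpdateCharpoly a₁ a₂ a₃ g₁ g₂ g₃ s w₁ w₂ w₃) :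
    (g₁ - a₁) * (g₂ - a₁) * (g₃ - a₁) = s * w₁ * ((a₂ - a₁) * (a₃ - a₁)) := by
  linear_combination hq a₁

lemma cubic_eq_mid (hq : IsRankOneUpdateCharpoly a₁ a₂ a₃ g₁ g₂ g₃ s w₁ w₂ w₃) :
    (g₁ - a₂) * (g₂ - a₂) * (g₃ - a₂) = s * w₂ * ((a₁ - a₂) * (a₃ - a₂)) := by
  linear_combination hq a₂

lemma cubic_eq_right (hq : IsRankOneUpdateCharpoly a₁ a₂ a₃ g₁ g₂ g₃ s w₁ w₂ w₃) :
    (g₁ - a₃) * (g₂ - a₃) * (g₃ - a₃) = s * w₃ * ((a₁ - a₃) * (a₂ - a₃)) := by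
  linear_combination hq a₃

end IsRankOneUpdateCharpoly

lemma interlaces_of_isRankOneUpdateCharpoly_of_nonneg
    (hq : IsRankOneUpdateCharpoly a₁ a₂ a₃ g₁ g₂ g₃ s w₁ w₂ w₃)
    (ha₁₂ : a₁ < a₂) (ha₂₃ : a₂ < a₃) (hg₁₂ : g₁ ≤ g₂) (hg₂₃ : g₂ ≤ g₃)
    (hs : 0 ≤ s) (hw₁ : 0 ≤ w₁) (hw₂ : 0 ≤ w₂) (hw₃ : 0 ≤ w₃) :
    Interlaces a₁ a₂ a₃ g₁ g₂ g₃ := by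
  have hq₁ : 0 ≤ (g₁ - a₁) * (g₂ - a₁) * (g₃ - a₁) := by
    rw [hq.cubic_eq_left]
    exact mul_nonneg (mul_nonneg hs hw₁) (mul_nonneg (by linarith) (by linarith))
  have hq₂ : (g₁ - a₂) * (g₂ - a₂) * (g₃ - a₂) ≤ 0 := by
    rw [hq.cubic_eq_mid]
    exact mul_nonpos_of_nonneg_of_nonpos (mul_nonneg hs hw₂)
      (mul_nonpos_of_nonpos_of_nonneg (by linarith) (by linarith))
  have hq₃ : 0 ≤ (g₁ - a₃) * (g₂ - a₃) * (g₃ - a₃) := by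
    rw [hq.cubic_eq_right]
    exact mul_nonneg (mul_nonneg hs hw₃)
      (mul_nonneg_of_nonpos_of_nonpos (by linarith) (by linarith))
  have h₃₃ : a₃ ≤ g₃ := not_lt.1 fun h => (cubic_neg_of_gt_right hg₁₂ hg₂₃ h).not_ge hq₃
  have h₁₂ : g₁ ≤ a₂ := not_lt.1 fun h => (cubic_pos_of_lt_left hg₁₂ hg₂₃ h).not_ge hq₂
  have h₂₂ : a₂ ≤ g₂ := not_lt.1 fun h =>
    (cubic_pos_of_mem_Ioo_right hg₁₂ h (by linarith)).not_ge hq₂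
  have h₁₁ : a₁ ≤ g₁ := not_lt.1 fun h =>
    (cubic_neg_of_mem_Ioo_left hg₂₃ h (by linarith)).not_ge hq₁
  have h₂₃ : g₂ ≤ a₃ := not_lt.1 fun h =>
    (cubic_neg_of_mem_Ioo_left hg₂₃ (by linarith) h).not_ge hq₃
  exact ⟨h₁₁, h₁₂, h₂₂, h₂₃, h₃₃⟩

lemma interlaces_of_isRankOneUpdateCharpoly_of_nonpos
    (hq : IsRankOneUpdateCharpoly a₁ a₂ a₃ g₁ g₂ g₃ s w₁ w₂ w₃)
    (ha₁₂ : a₁ < a₂) (ha₂₃ : a₂ < a₃) (hg₁₂ : g₁ ≤ g₂) (hg₂₃ : g₂ ≤ g₃)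
    (hs : s ≤ 0) (hw₁ : 0 ≤ w₁) (hw₂ : 0 ≤ w₂) (hw₃ : 0 ≤ w₃) :
    Interlaces g₁ g₂ g₃ a₁ a₂ a₃ := by
  have hq₁ : (g₁ - a₁) * (g₂ - a₁) * (g₃ - a₁) ≤ 0 := by
    rw [hq.cubic_eq_left]
    exact mul_nonpos_of_nonpos_of_nonneg (mul_nonpos_of_nonpos_of_nonneg hs hw₁)
      (mul_nonneg (by linarith) (by linarith))
  have hq₂ : 0 ≤ (g₁ - a₂) * (g₂ - a₂) * (g₃ - a₂) := by
    rw [hq.cubic_eq_mid]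
    exact mul_nonneg_of_nonpos_of_nonpos (mul_nonpos_of_nonpos_of_nonneg hs hw₂)
      (mul_nonpos_of_nonpos_of_nonneg (by linarith) (by linarith))
  have hq₃ : (g₁ - a₃) * (g₂ - a₃) * (g₃ - a₃) ≤ 0 := by
    rw [hq.cubic_eq_right]
    exact mul_nonpos_of_nonpos_of_nonneg (mul_nonpos_of_nonpos_of_nonneg hs hw₃)
      (mul_nonneg_of_nonpos_of_nonpos (by linarith) (by linarith))
  have h₁₁ : g₁ ≤ a₁ := not_lt.1 fun h => (cubic_pos_of_lt_left hg₁₂ hg₂₃ h).not_ge hq₁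
  have h₂₃ : a₂ ≤ g₃ := not_lt.1 fun h => (cubic_neg_of_gt_right hg₁₂ hg₂₃ h).not_ge hq₂
  have h₂₂ : g₂ ≤ a₂ := not_lt.1 fun h =>
    (cubic_neg_of_mem_Ioo_left hg₂₃ (by linarith) h).not_ge hq₂
  have h₁₂ : a₁ ≤ g₂ := not_lt.1 fun h =>
    (cubic_pos_of_mem_Ioo_right hg₁₂ h (by linarith)).not_ge hq₁
  have h₃₃ : g₃ ≤ a₃ := not_lt.1 fun h =>
    (cubic_pos_of_mem_Ioo_right hg₁₂ (by linarith) h).not_ge hq₃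
  exact ⟨h₁₁, h₁₂, h₂₂, h₂₃, h₃₃⟩

end RankOneUpdate

lemma det_transpose_mul_mul_sub_smul_one {R : Matrix (Fin 3) (Fin 3) ℝ} (hR : Rᵀ * R = 1)
    (M : Matrix (Fin 3) (Fin 3) ℝ) (x : ℝ) :
    (Rᵀ * M * R - x • 1).det = (M - x • 1).det := by
  have hconj : Rᵀ * M * R - x • 1 = Rᵀ * (M - x • 1) * R := by
    rw [Matrix.mul_sub, Matrix.sub_mul, Matrix.mul_smul, Matrix.mul_one, Matrix.smul_mul, hR]
  have hdet : Rᵀ.det * R.det = 1 := by rw [← det_mul, hR, det_one]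
  rw [hconj, det_mul, det_mul, mul_comm Rᵀ.det, mul_assoc, hdet, mul_one]

lemma det_diagonal_sub_smul_one (d : Fin 3 → ℝ) (x : ℝ) :
    (diagonal d - x • 1).det = (d 0 - x) * (d 1 - x) * (d 2 - x) := by
  simp [det_fin_three]

lemma det_diagonal_add_smul_outer_sub_smul_one (d n : Fin 3 → ℝ) (c x : ℝ) :
    (diagonal d + c • outer n - x • 1).det = (d 0 - x) * (d 1 - x) * (d 2 - x) +
      c * (n 0 ^ 2 * ((d 1 - x) * (d 2 - x)) + n 1 ^ 2 * ((d 0 - x) * (d 2 - x)) +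
        n 2 ^ 2 * ((d 0 - x) * (d 1 - x))) := by
  simp [det_fin_three, outer, vecMulVec_apply]
  ring

lemma mem_Icc_alphaMinus_alphaPlus {f₁ f₂ f₃ g₁ g₂ g₃ lam : ℝ}
    (hf₁ : 0 < f₁) (hf₂ : 0 < f₂) (hf₃ : 0 < f₃)
    (h : Interlaces (lam * f₁) (lam * f₂) (lam * f₃) g₁ g₂ g₃) :
    lam ∈ Icc (alphaMinus f₁ f₂ f₃ g₁ g₂ g₃) (alphaPlus f₁ f₂ f₃ g₁ g₂ g₃) := by
  obtain ⟨h₁₁, h₁₂, h₂₂, h₂₃, h₃₃⟩ := h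
  exact ⟨max_le ((div_le_iff₀ hf₂).2 h₁₂) ((div_le_iff₀ hf₃).2 h₂₃),
    le_min ((le_div_iff₀ hf₁).2 h₁₁) (le_min ((le_div_iff₀ hf₂).2 h₂₂) ((le_div_iff₀ hf₃).2 h₃₃))⟩

lemma mem_Icc_betaMinus_betaPlus {f₁ f₂ f₃ g₁ g₂ g₃ lam : ℝ}
    (hf₁ : 0 < f₁) (hf₂ : 0 < f₂) (hf₃ : 0 < f₃)
    (h : Interlaces g₁ g₂ g₃ (lam * f₁) (lam * f₂) (lam * f₃)) :
    lam ∈ Icc (betaMinus f₁ f₂ f₃ g₁ g₂ g₃) (betaPlus f₁ f₂ f₃ g₁ g₂ g₃) := by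
  obtain ⟨h₁₁, h₁₂, h₂₂, h₂₃, h₃₃⟩ := h
  exact ⟨max_le ((div_le_iff₀ hf₁).2 h₁₁) (max_le ((div_le_iff₀ hf₂).2 h₂₂)
    ((div_le_iff₀ hf₃).2 h₃₃)), le_min ((le_div_iff₀ hf₁).2 h₁₂) ((le_div_iff₀ hf₂).2 h₂₃)⟩

theorem statement0_general (f1 f2 f3 g1 g2 g3 : ℝ)
    (hf1 : 0 < f1) (hf12 : f1 < f2) (hf23 : f2 < f3)
    (hg1 : 0 < g1) (hg12 : g1 ≤ g2) (hg23 : g2 ≤ g3)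
    (R : Matrix (Fin 3) (Fin 3) ℝ) (hR : IsSO3 R)
    (n : Fin 3 → ℝ) (lam : ℝ) (hlam : lam ≠ 1)
    (heq : Rᵀ * Matrix.diagonal ![g1, g2, g3] * R =
      lam • Matrix.diagonal ![f1, f2, f3] + (1 - lam) • outer n) :
    lam ∈ setA f1 f2 f3 g1 g2 g3 := by
  have hchar : IsRankOneUpdateCharpoly (lam * f1) (lam * f2) (lam * f3) g1 g2 g3
      (1 - lam) (n 0 ^ 2) (n 1 ^ 2) (n 2 ^ 2) := fun x => by
    have h := det_transpose_mul_mul_sub_smul_one hR.1 (diagonal ![g1, g2, g3]) x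
    rw [heq, ← diagonal_smul, det_diagonal_add_smul_outer_sub_smul_one,
      det_diagonal_sub_smul_one] at h
    simpa using h.symm
  have hlam_pos : 0 < lam := by
    by_contra! h
    have hq₂ : (g1 - lam * f2) * (g2 - lam * f2) * (g3 - lam * f2) =
        (1 - lam) * n 1 ^ 2 * lam ^ 2 * ((f1 - f2) * (f3 - f2)) := by
      linear_combination hchar (lam * f2)
    have hpos := cubic_pos_of_lt_left hg12 hg23 (show lam * f2 < g1 by nlinarith)
    rw [hq₂] at hpos
    exact hpos.not_ge (mul_nonpos_of_nonneg_of_nonpos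
      (mul_nonneg (mul_nonneg (by linarith) (sq_nonneg _)) (sq_nonneg _))
      (mul_nonpos_of_nonpos_of_nonneg (by linarith) (by linarith)))
  have hf2 : 0 < f2 := hf1.trans hf12
  have hf3 : 0 < f3 := hf2.trans hf23
  have hlf12 : lam * f1 < lam * f2 := mul_lt_mul_of_pos_left hf12 hlam_pos
  have hlf23 : lam * f2 < lam * f3 := mul_lt_mul_of_pos_left hf23 hlam_pos
  refine ⟨?_, hlam⟩
  rcases hlam.lt_or_gt with hlt | hgt
  · exact Or.inl <| mem_Icc_alphaMinus_alphaPlus hf1 hf2 hf3 <|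
      interlaces_of_isRankOneUpdateCharpoly_of_nonneg hchar hlf12 hlf23 hg12 hg23
        (by linarith) (sq_nonneg _) (sq_nonneg _) (sq_nonneg _)
  · exact Or.inr <| mem_Icc_betaMinus_betaPlus hf1 hf2 hf3 <|
      interlaces_of_isRankOneUpdateCharpoly_of_nonpos hchar hlf12 hlf23 hg12 hg23
        (by linarith) (sq_nonneg _) (sq_nonneg _) (sq_nonneg _)

theorem statement0 (f1 f2 f3 g1 g2 g3 : ℝ)
    (hf1 : 0 < f1) (hf12 : f1 < f2) (hf23 : f2 < f3) (hfsum : f1 + f2 + f3 = 1)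
    (hg1 : 0 < g1) (hg12 : g1 ≤ g2) (hg23 : g2 ≤ g3) (hgsum : g1 + g2 + g3 = 1)
    (R : Matrix (Fin 3) (Fin 3) ℝ) (hR : IsSO3 R)
    (n : Fin 3 → ℝ) (hn : unitVec n) (lam : ℝ) (hlam : lam ≠ 1)
    (heq : Rᵀ * Matrix.diagonal ![g1, g2, g3] * R =
      lam • Matrix.diagonal ![f1, f2, f3] + (1 - lam) • outer n) :
    lam ∈ setA f1 f2 f3 g1 g2 g3 :=
  statement0_general f1 f2 f3 g1 g2 g3 hf1 hf12 hf23 hg1 hg12 hg23 R hR n lam hlam heq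
end
end

section
/- Let F = diag(f₁,f₂,f₃) with 0 < f₁ < f₂ < f₃ and f₁+f₂+f₃ = 1, and let G = diag(g₁,g₂,g₃) with 0 < g₁ ≤ g₂ ≤ g₃ and g₁+g₂+g₃ = 1. If λ ∈ A(F,G), then the three quantities N₁ := (g₁−λf₁)(g₂−λf₁)(g₃−λf₁)/(λ²(1−λ)(f₂−f₁)(f₃−f₁)), N₂ := (g₁−λf₂)(g₂−λf₂)(g₃−λf₂)/(λ²(1−λ)(f₃−f₂)(f₁−f₂)), N₃ := (g₁−λf₃)(g₂−λf₃)(g₃−λf₃)/(λ²(1−λ)(f₁−f₃)(f₂−f₃)) are nonnegative, and there exist R ∈ SO(3) and a unit vector n ∈ ℝ³ with n₁² = N₁, n₂² = N₂, n₃² = N₃ such that Rᵀ G R = λ F + (1−λ) n⊗n. (Second half of Lemma 2.5.) -/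
open Matrix Set

noncomputable section

/-!
Every λ ∈ A(F,G) is positive, differs from 1, and makes the spectra interlace:
λf₁ ≤ g₁ ≤ λf₂ ≤ g₂ ≤ λf₃ ≤ g₃ when λ < 1 and g₁ ≤ λf₁ ≤ g₂ ≤ λf₂ ≤ g₃ ≤ λf₃ when λ > 1;
interlacing is exactly what makes each Nᵢ nonnegative.

With nᵢ² = Nᵢ the characteristic polynomial of M = λF + (1−λ) n⊗n is
∏ (t − λfᵢ) − (1−λ) Σᵢ Nᵢ ∏_{j≠i} (t − λfⱼ), and the Nᵢ are chosen so that this monic cubic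
agrees with ∏ (t − gⱼ) at the three distinct points t = λfᵢ (Lagrange interpolation); hence
M and G have the same characteristic polynomial. Both being symmetric, they are conjugate by an
orthogonal matrix, which can be taken in SO(3) because −1 has determinant −1 in odd dimension.
The normalisations tr F = tr G = 1 force Σ Nᵢ = 1, i.e. n is a unit vector.
-/

open Polynomial

lemma Matrix.exists_unitary_conj_of_charpoly_eq {𝕜 n : Type*} [RCLike 𝕜] [Fintype n]
    [DecidableEq n] {A B : Matrix n n 𝕜} (hA : A.IsHermitian) (hB : B.IsHermitian)
    (h : A.charpoly = B.charpoly) :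
    ∃ W : unitary (Matrix n n 𝕜), Unitary.conjStarAlgAut 𝕜 _ W B = A := by
  have hD : hA.eigenvalues = hB.eigenvalues := (hA.eigenvalues_eq_eigenvalues_iff hB).2 h
  refine ⟨hA.eigenvectorUnitary * star hB.eigenvectorUnitary, ?_⟩
  rw [Unitary.conjStarAlgAut_mul_apply, hB.conjStarAlgAut_star_eigenvectorUnitary, ← hD,
    ← hA.spectral_theorem]

lemma Matrix.exists_orthogonal_conj_of_charpoly_eq {n : Type*} [Fintype n] [DecidableEq n]
    {A B : Matrix n n ℝ} (hA : A.IsSymm) (hB : B.IsSymm) (h : A.charpoly = B.charpoly) :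
    ∃ Q : Matrix n n ℝ, Qᵀ * Q = 1 ∧ Qᵀ * B * Q = A := by
  obtain ⟨W, hW⟩ := exists_unitary_conj_of_charpoly_eq (isHermitian_iff_isSymm.2 hA)
    (isHermitian_iff_isSymm.2 hB) h
  have hstar : star (W : Matrix n n ℝ) = (W : Matrix n n ℝ)ᵀ := by
    rw [star_eq_conjTranspose, conjTranspose_eq_transpose_of_trivial]
  refine ⟨(W : Matrix n n ℝ)ᵀ, ?_, ?_⟩
  · rw [transpose_transpose, ← hstar, Unitary.mul_star_self_of_mem W.2]
  · rwa [transpose_transpose, ← hstar, ← Unitary.conjStarAlgAut_apply (S := ℝ)]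

lemma Matrix.exists_special_orthogonal_conj_of_charpoly_eq {n : Type*} [Fintype n]
    [DecidableEq n] (hn : Odd (Fintype.card n)) {A B : Matrix n n ℝ} (hA : A.IsSymm)
    (hB : B.IsSymm) (h : A.charpoly = B.charpoly) :
    ∃ Q : Matrix n n ℝ, Qᵀ * Q = 1 ∧ Q.det = 1 ∧ Qᵀ * B * Q = A := by
  obtain ⟨Q, hQ, hQA⟩ := exists_orthogonal_conj_of_charpoly_eq hA hB h
  have hdet : Q.det * Q.det = 1 := by
    simpa [det_mul, det_transpose] using congrArg det hQ
  rcases mul_self_eq_one_iff.1 hdet with hQ1 | hQ1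
  · exact ⟨Q, hQ, hQ1, hQA⟩
  · refine ⟨-Q, by simpa using hQ, ?_, by simpa using hQA⟩
    rw [det_neg, hn.neg_one_pow, hQ1, neg_mul_neg, one_mul]

lemma i2_eq_sum_principal_minors (M : Matrix (Fin 3) (Fin 3) ℝ) :
    i2 M = M 0 0 * M 1 1 - M 0 1 * M 1 0 + (M 0 0 * M 2 2 - M 0 2 * M 2 0)
      + (M 1 1 * M 2 2 - M 1 2 * M 2 1) := by
  simp only [i2, trace_fin_three, mul_apply, Fin.sum_univ_three]
  ring

lemma charpoly_fin_three (M : Matrix (Fin 3) (Fin 3) ℝ) :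
    M.charpoly = X ^ 3 - C M.trace * X ^ 2 + C (i2 M) * X - C M.det := by
  rw [i2_eq_sum_principal_minors, charpoly, det_fin_three, det_fin_three, trace_fin_three]
  simp only [charmatrix_apply, diagonal_apply, Fin.reduceEq, if_true, if_false, map_add, map_sub,
    map_mul]
  ring

lemma charpoly_eq_of_trace_eq_of_i2_eq_of_det_eq {A B : Matrix (Fin 3) (Fin 3) ℝ}
    (h1 : A.trace = B.trace) (h2 : i2 A = i2 B) (h3 : A.det = B.det) :
    A.charpoly = B.charpoly := by
  rw [charpoly_fin_three, charpoly_fin_three, h1, h2, h3]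

lemma i2_diagonal (d : Fin 3 → ℝ) : i2 (diagonal d) = d 0 * d 1 + d 0 * d 2 + d 1 * d 2 := by
  simp [i2_eq_sum_principal_minors]

section RankOnePerturbation

variable (d v : Fin 3 → ℝ) (lam : ℝ)

lemma isSymm_smul_diagonal_add_smul_outer :
    (lam • diagonal d + (1 - lam) • outer v).IsSymm :=
  ((isSymm_diagonal d).smul lam).add (by simp [outer, IsSymm, transpose_vecMulVec])

lemma trace_smul_diagonal_add_smul_outer :
    (lam • diagonal d + (1 - lam) • outer v).trace
      = lam * (d 0 + d 1 + d 2) + (1 - lam) * (v 0 ^ 2 + v 1 ^ 2 + v 2 ^ 2) := by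
  simp only [outer, trace_add, trace_smul, trace_diagonal, trace_vecMulVec, dotProduct,
    Fin.sum_univ_three, smul_eq_mul]
  ring

lemma i2_smul_diagonal_add_smul_outer :
    i2 (lam • diagonal d + (1 - lam) • outer v)
      = lam ^ 2 * (d 0 * d 1 + d 0 * d 2 + d 1 * d 2) + lam * (1 - lam) *
        (v 0 ^ 2 * (d 1 + d 2) + v 1 ^ 2 * (d 0 + d 2) + v 2 ^ 2 * (d 0 + d 1)) := by
  simp only [i2_eq_sum_principal_minors, Matrix.add_apply, Matrix.smul_apply, diagonal_apply,
    outer, vecMulVec_apply, Fin.reduceEq, if_true, if_false, smul_eq_mul]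
  ring

lemma det_smul_diagonal_add_smul_outer :
    (lam • diagonal d + (1 - lam) • outer v).det
      = lam ^ 3 * (d 0 * d 1 * d 2) + lam ^ 2 * (1 - lam) *
        (v 0 ^ 2 * (d 1 * d 2) + v 1 ^ 2 * (d 0 * d 2) + v 2 ^ 2 * (d 0 * d 1)) := by
  simp only [det_fin_three, Matrix.add_apply, Matrix.smul_apply, diagonal_apply, outer,
    vecMulVec_apply, Fin.reduceEq, if_true, if_false, smul_eq_mul]
  ring

end RankOnePerturbation

/-- `weight g₁ g₂ g₃ λ fᵢ fⱼ fₖ` is `Nᵢ`, for `(i, j, k)` a cyclic permutation of `(1, 2, 3)`. -/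
def weight (g1 g2 g3 lam a b c : ℝ) : ℝ :=
  (g1 - lam * a) * (g2 - lam * a) * (g3 - lam * a) / (lam ^ 2 * (1 - lam) * (b - a) * (c - a))

section WeightIdentities

variable {f1 f2 f3 : ℝ} (g1 g2 g3 : ℝ) {lam : ℝ}

lemma weight_sum_eq (h0 : lam ≠ 0) (h1 : lam ≠ 1) (h12 : f1 ≠ f2) (h13 : f1 ≠ f3)
    (h23 : f2 ≠ f3) :
    lam * (f1 + f2 + f3) + (1 - lam) * (weight g1 g2 g3 lam f1 f2 f3 +
      weight g1 g2 g3 lam f2 f3 f1 + weight g1 g2 g3 lam f3 f1 f2) = g1 + g2 + g3 := by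
  unfold weight
  field_simp
  ring

lemma weight_sum_pair_mul_eq (h0 : lam ≠ 0) (h1 : lam ≠ 1) (h12 : f1 ≠ f2) (h13 : f1 ≠ f3)
    (h23 : f2 ≠ f3) :
    lam ^ 2 * (f1 * f2 + f1 * f3 + f2 * f3) + lam * (1 - lam) *
      (weight g1 g2 g3 lam f1 f2 f3 * (f2 + f3) + weight g1 g2 g3 lam f2 f3 f1 * (f1 + f3) +
        weight g1 g2 g3 lam f3 f1 f2 * (f1 + f2)) = g1 * g2 + g1 * g3 + g2 * g3 := by
  unfold weight
  field_simp
  ring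

lemma weight_sum_prod_eq (h0 : lam ≠ 0) (h1 : lam ≠ 1) (h12 : f1 ≠ f2) (h13 : f1 ≠ f3)
    (h23 : f2 ≠ f3) :
    lam ^ 3 * (f1 * f2 * f3) + lam ^ 2 * (1 - lam) *
      (weight g1 g2 g3 lam f1 f2 f3 * (f2 * f3) + weight g1 g2 g3 lam f2 f3 f1 * (f1 * f3) +
        weight g1 g2 g3 lam f3 f1 f2 * (f1 * f2)) = g1 * g2 * g3 := by
  unfold weight
  field_simp
  ring

lemma weight_sum_eq_one (hfsum : f1 + f2 + f3 = 1) (hgsum : g1 + g2 + g3 = 1) (h0 : lam ≠ 0)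
    (h1 : lam ≠ 1) (h12 : f1 ≠ f2) (h13 : f1 ≠ f3) (h23 : f2 ≠ f3) :
    weight g1 g2 g3 lam f1 f2 f3 + weight g1 g2 g3 lam f2 f3 f1 + weight g1 g2 g3 lam f3 f1 f2
      = 1 := by
  have h := weight_sum_eq g1 g2 g3 h0 h1 h12 h13 h23
  rw [hfsum, hgsum] at h
  exact mul_left_cancel₀ (sub_ne_zero.2 h1.symm) (by linarith)

lemma charpoly_eq_of_sq_eq_weight (h0 : lam ≠ 0) (h1 : lam ≠ 1) (h12 : f1 ≠ f2) (h13 : f1 ≠ f3)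
    (h23 : f2 ≠ f3) {v : Fin 3 → ℝ} (hv0 : v 0 ^ 2 = weight g1 g2 g3 lam f1 f2 f3)
    (hv1 : v 1 ^ 2 = weight g1 g2 g3 lam f2 f3 f1) (hv2 : v 2 ^ 2 = weight g1 g2 g3 lam f3 f1 f2) :
    (lam • diagonal ![f1, f2, f3] + (1 - lam) • outer v).charpoly =
      (diagonal ![g1, g2, g3]).charpoly := by
  apply charpoly_eq_of_trace_eq_of_i2_eq_of_det_eq
  · rw [trace_smul_diagonal_add_smul_outer, trace_diagonal, Fin.sum_univ_three, hv0, hv1, hv2]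
    exact weight_sum_eq g1 g2 g3 h0 h1 h12 h13 h23
  · rw [i2_smul_diagonal_add_smul_outer, i2_diagonal, hv0, hv1, hv2]
    exact weight_sum_pair_mul_eq g1 g2 g3 h0 h1 h12 h13 h23
  · rw [det_smul_diagonal_add_smul_outer, det_diagonal, Fin.prod_univ_three, hv0, hv1, hv2]
    exact weight_sum_prod_eq g1 g2 g3 h0 h1 h12 h13 h23

end WeightIdentities

section Interlacing

variable {f1 f2 f3 g1 g2 g3 lam : ℝ}

lemma weights_nonneg_of_lt_one (hl : lam < 1) (h12 : f1 < f2) (h23 : f2 < f3)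
    (h1 : lam * f1 ≤ g1) (h2 : g1 ≤ lam * f2) (h3 : lam * f2 ≤ g2) (h4 : g2 ≤ lam * f3)
    (h5 : lam * f3 ≤ g3) :
    0 ≤ weight g1 g2 g3 lam f1 f2 f3 ∧ 0 ≤ weight g1 g2 g3 lam f2 f3 f1 ∧
      0 ≤ weight g1 g2 g3 lam f3 f1 f2 := by
  refine ⟨div_nonneg ?_ ?_, div_nonneg_of_nonpos ?_ ?_, div_nonneg ?_ ?_⟩
  · exact mul_nonneg (mul_nonneg (by linarith) (by linarith)) (by linarith)
  · exact mul_nonneg (mul_nonneg (mul_nonneg (sq_nonneg _) (by linarith)) (by linarith))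
      (by linarith)
  · exact mul_nonpos_of_nonpos_of_nonneg
      (mul_nonpos_of_nonpos_of_nonneg (by linarith) (by linarith)) (by linarith)
  · exact mul_nonpos_of_nonneg_of_nonpos
      (mul_nonneg (mul_nonneg (sq_nonneg _) (by linarith)) (by linarith)) (by linarith)
  · exact mul_nonneg (mul_nonneg_of_nonpos_of_nonpos (by linarith) (by linarith)) (by linarith)
  · exact mul_nonneg_of_nonpos_of_nonpos (mul_nonpos_of_nonneg_of_nonpos
      (mul_nonneg (sq_nonneg _) (by linarith)) (by linarith)) (by linarith)

lemma weights_nonneg_of_one_lt (hl : 1 < lam) (h12 : f1 < f2) (h23 : f2 < f3)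
    (h1 : g1 ≤ lam * f1) (h2 : lam * f1 ≤ g2) (h3 : g2 ≤ lam * f2) (h4 : lam * f2 ≤ g3)
    (h5 : g3 ≤ lam * f3) :
    0 ≤ weight g1 g2 g3 lam f1 f2 f3 ∧ 0 ≤ weight g1 g2 g3 lam f2 f3 f1 ∧
      0 ≤ weight g1 g2 g3 lam f3 f1 f2 := by
  refine ⟨div_nonneg_of_nonpos ?_ ?_, div_nonneg ?_ ?_, div_nonneg_of_nonpos ?_ ?_⟩
  · exact mul_nonpos_of_nonpos_of_nonneg
      (mul_nonpos_of_nonpos_of_nonneg (by linarith) (by linarith)) (by linarith)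
  · exact mul_nonpos_of_nonpos_of_nonneg (mul_nonpos_of_nonpos_of_nonneg
      (mul_nonpos_of_nonneg_of_nonpos (sq_nonneg _) (by linarith)) (by linarith))
      (by linarith)
  · exact mul_nonneg (mul_nonneg_of_nonpos_of_nonpos (by linarith) (by linarith)) (by linarith)
  · exact mul_nonneg_of_nonpos_of_nonpos (mul_nonpos_of_nonpos_of_nonneg
      (mul_nonpos_of_nonneg_of_nonpos (sq_nonneg _) (by linarith)) (by linarith))
      (by linarith)
  · exact mul_nonpos_of_nonneg_of_nonpos
      (mul_nonneg_of_nonpos_of_nonpos (by linarith) (by linarith)) (by linarith)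
  · exact mul_nonpos_of_nonneg_of_nonpos (mul_nonneg_of_nonpos_of_nonpos
      (mul_nonpos_of_nonneg_of_nonpos (sq_nonneg _) (by linarith)) (by linarith)) (by linarith)

lemma interlacing_of_mem_Icc_alpha (hf1 : 0 < f1) (hf2 : 0 < f2) (hf3 : 0 < f3)
    (h : lam ∈ Icc (alphaMinus f1 f2 f3 g1 g2 g3) (alphaPlus f1 f2 f3 g1 g2 g3)) :
    lam * f1 ≤ g1 ∧ g1 ≤ lam * f2 ∧ lam * f2 ≤ g2 ∧ g2 ≤ lam * f3 ∧ lam * f3 ≤ g3 := by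
  simp only [mem_Icc, alphaMinus, alphaPlus, max_le_iff, le_min_iff, div_le_iff₀ hf2,
    div_le_iff₀ hf3, le_div_iff₀ hf1, le_div_iff₀ hf2, le_div_iff₀ hf3] at h
  obtain ⟨⟨h2, h4⟩, h1, h3, h5⟩ := h
  exact ⟨h1, h2, h3, h4, h5⟩

lemma interlacing_of_mem_Icc_beta (hf1 : 0 < f1) (hf2 : 0 < f2) (hf3 : 0 < f3)
    (h : lam ∈ Icc (betaMinus f1 f2 f3 g1 g2 g3) (betaPlus f1 f2 f3 g1 g2 g3)) :
    g1 ≤ lam * f1 ∧ lam * f1 ≤ g2 ∧ g2 ≤ lam * f2 ∧ lam * f2 ≤ g3 ∧ g3 ≤ lam * f3 := by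
  simp only [mem_Icc, betaMinus, betaPlus, max_le_iff, le_min_iff, div_le_iff₀ hf1,
    div_le_iff₀ hf2, div_le_iff₀ hf3, le_div_iff₀ hf1, le_div_iff₀ hf2] at h
  obtain ⟨⟨h1, h3, h5⟩, h2, h4⟩ := h
  exact ⟨h1, h2, h3, h4, h5⟩

lemma pos_of_mem_setA (hf1 : 0 < f1) (hf12 : f1 < f2) (hg1 : 0 < g1)
    (h : lam ∈ setA f1 f2 f3 g1 g2 g3) : 0 < lam := by
  rcases h.1 with ⟨h, -⟩ | ⟨h, -⟩
  · exact (div_pos hg1 (hf1.trans hf12)).trans_le ((le_max_left _ _).trans h)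
  · exact (div_pos hg1 hf1).trans_le ((le_max_left _ _).trans h)

lemma weights_nonneg_of_mem_setA (hf1 : 0 < f1) (hf12 : f1 < f2) (hf23 : f2 < f3)
    (hfsum : f1 + f2 + f3 = 1) (hgsum : g1 + g2 + g3 = 1) (h : lam ∈ setA f1 f2 f3 g1 g2 g3) :
    0 ≤ weight g1 g2 g3 lam f1 f2 f3 ∧ 0 ≤ weight g1 g2 g3 lam f2 f3 f1 ∧
      0 ≤ weight g1 g2 g3 lam f3 f1 f2 := by
  have hf2 := hf1.trans hf12
  have hf3 := hf2.trans hf23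
  obtain ⟨hI | hI, hne : lam ≠ 1⟩ := h
  · obtain ⟨h1, h2, h3, h4, h5⟩ := interlacing_of_mem_Icc_alpha hf1 hf2 hf3 hI
    have hl : lam ≤ 1 := by nlinarith
    exact weights_nonneg_of_lt_one (hl.lt_of_ne hne) hf12 hf23 h1 h2 h3 h4 h5
  · obtain ⟨h1, h2, h3, h4, h5⟩ := interlacing_of_mem_Icc_beta hf1 hf2 hf3 hI
    have hl : 1 ≤ lam := by nlinarith
    exact weights_nonneg_of_one_lt (hl.lt_of_ne' hne) hf12 hf23 h1 h2 h3 h4 h5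

end Interlacing

theorem statement1_general (f1 f2 f3 g1 g2 g3 : ℝ)
    (hf1 : 0 < f1) (hf12 : f1 < f2) (hf23 : f2 < f3) (hfsum : f1 + f2 + f3 = 1)
    (hg1 : 0 < g1) (hgsum : g1 + g2 + g3 = 1)
    (lam : ℝ) (hlam : lam ∈ setA f1 f2 f3 g1 g2 g3) :
    0 ≤ (g1 - lam * f1) * (g2 - lam * f1) * (g3 - lam * f1) /
        (lam ^ 2 * (1 - lam) * (f2 - f1) * (f3 - f1)) ∧
    0 ≤ (g1 - lam * f2) * (g2 - lam * f2) * (g3 - lam * f2) /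
        (lam ^ 2 * (1 - lam) * (f3 - f2) * (f1 - f2)) ∧
    0 ≤ (g1 - lam * f3) * (g2 - lam * f3) * (g3 - lam * f3) /
        (lam ^ 2 * (1 - lam) * (f1 - f3) * (f2 - f3)) ∧
    ∃ (R : Matrix (Fin 3) (Fin 3) ℝ) (n : Fin 3 → ℝ), IsSO3 R ∧ unitVec n ∧
      n 0 ^ 2 = (g1 - lam * f1) * (g2 - lam * f1) * (g3 - lam * f1) /
        (lam ^ 2 * (1 - lam) * (f2 - f1) * (f3 - f1)) ∧
      n 1 ^ 2 = (g1 - lam * f2) * (g2 - lam * f2) * (g3 - lam * f2) /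
        (lam ^ 2 * (1 - lam) * (f3 - f2) * (f1 - f2)) ∧
      n 2 ^ 2 = (g1 - lam * f3) * (g2 - lam * f3) * (g3 - lam * f3) /
        (lam ^ 2 * (1 - lam) * (f1 - f3) * (f2 - f3)) ∧
      Rᵀ * Matrix.diagonal ![g1, g2, g3] * R =
        lam • Matrix.diagonal ![f1, f2, f3] + (1 - lam) • outer n := by
  obtain ⟨hN1, hN2, hN3⟩ := weights_nonneg_of_mem_setA hf1 hf12 hf23 hfsum hgsum hlam
  have h0 : lam ≠ 0 := (pos_of_mem_setA hf1 hf12 hg1 hlam).ne'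
  have h1 : lam ≠ 1 := hlam.2
  have h12 := hf12.ne
  have h13 := (hf12.trans hf23).ne
  have h23 := hf23.ne
  set n : Fin 3 → ℝ := ![√(weight g1 g2 g3 lam f1 f2 f3), √(weight g1 g2 g3 lam f2 f3 f1),
    √(weight g1 g2 g3 lam f3 f1 f2)]
  have hn0 : n 0 ^ 2 = weight g1 g2 g3 lam f1 f2 f3 := Real.sq_sqrt hN1
  have hn1 : n 1 ^ 2 = weight g1 g2 g3 lam f2 f3 f1 := Real.sq_sqrt hN2
  have hn2 : n 2 ^ 2 = weight g1 g2 g3 lam f3 f1 f2 := Real.sq_sqrt hN3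
  obtain ⟨R, hR, hRdet, hRM⟩ := exists_special_orthogonal_conj_of_charpoly_eq (by decide)
    (isSymm_smul_diagonal_add_smul_outer _ _ _) (isSymm_diagonal _)
    (charpoly_eq_of_sq_eq_weight g1 g2 g3 h0 h1 h12 h13 h23 hn0 hn1 hn2)
  have hunit : unitVec n := by
    rw [unitVec, hn0, hn1, hn2]
    exact weight_sum_eq_one g1 g2 g3 hfsum hgsum h0 h1 h12 h13 h23
  exact ⟨hN1, hN2, hN3, R, n, ⟨hR, hRdet⟩, hunit, hn0, hn1, hn2, hRM⟩

theorem statement1 (f1 f2 f3 g1 g2 g3 : ℝ)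
    (hf1 : 0 < f1) (hf12 : f1 < f2) (hf23 : f2 < f3) (hfsum : f1 + f2 + f3 = 1)
    (hg1 : 0 < g1) (hg12 : g1 ≤ g2) (hg23 : g2 ≤ g3) (hgsum : g1 + g2 + g3 = 1)
    (lam : ℝ) (hlam : lam ∈ setA f1 f2 f3 g1 g2 g3) :
    0 ≤ (g1 - lam * f1) * (g2 - lam * f1) * (g3 - lam * f1) /
        (lam ^ 2 * (1 - lam) * (f2 - f1) * (f3 - f1)) ∧
    0 ≤ (g1 - lam * f2) * (g2 - lam * f2) * (g3 - lam * f2) /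
        (lam ^ 2 * (1 - lam) * (f3 - f2) * (f1 - f2)) ∧
    0 ≤ (g1 - lam * f3) * (g2 - lam * f3) * (g3 - lam * f3) /
        (lam ^ 2 * (1 - lam) * (f1 - f3) * (f2 - f3)) ∧
    ∃ (R : Matrix (Fin 3) (Fin 3) ℝ) (n : Fin 3 → ℝ), IsSO3 R ∧ unitVec n ∧
      n 0 ^ 2 = (g1 - lam * f1) * (g2 - lam * f1) * (g3 - lam * f1) /
        (lam ^ 2 * (1 - lam) * (f2 - f1) * (f3 - f1)) ∧
      n 1 ^ 2 = (g1 - lam * f2) * (g2 - lam * f2) * (g3 - lam * f2) /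
        (lam ^ 2 * (1 - lam) * (f3 - f2) * (f1 - f2)) ∧
      n 2 ^ 2 = (g1 - lam * f3) * (g2 - lam * f3) * (g3 - lam * f3) /
        (lam ^ 2 * (1 - lam) * (f1 - f3) * (f2 - f3)) ∧
      Rᵀ * Matrix.diagonal ![g1, g2, g3] * R =
        lam • Matrix.diagonal ![f1, f2, f3] + (1 - lam) • outer n :=
  statement1_general f1 f2 f3 g1 g2 g3 hf1 hf12 hf23 hfsum hg1 hgsum lam hlam
end
end

section
/- Let F = diag(f₁,f₂,f₃) with 0 < f₁ < f₂ < f₃ and f₁+f₂+f₃ = 1. Then A(F,F) = [max(f₁/f₂, f₂/f₃), min(f₂/f₁, f₃/f₂)] \ {1}, this set is nonempty, and consequently there exist R ∈ SO(3), a unit vector n ∈ ℝ³ and a real number λ ≠ 1 such that Rᵀ F R = λ F + (1−λ) n⊗n. (Last assertion of Lemma 2.5.) -/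
open Matrix Set

noncomputable section

/-! Take `λ = f₁/f₂` if `f₂² ≤ f₁f₃`, and otherwise `λ = f₃/f₂`, which is the same case after a
rotation reversing the order of `f₁, f₂, f₃`. For `n = (√u, 0, √v)` the matrix `λF + (1 - λ) n⊗n`
has `e₂` as an eigenvector with eigenvalue `λf₂ = f₁`. On the complementary block its trace is
`f₂ + f₃` because `tr F = |n|² = 1`, and its determinant is linear in `u`, so `u + v = 1` can be
chosen to give the block the eigenvalues `f₂, f₃`; then `v ≥ 0` is exactly `f₂² ≤ f₁f₃`. A rotation
sending `e₂` to `-e₁` and the `(e₁, e₃)`-plane to the `(e₂, e₃)`-plane conjugates `F` to this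
matrix. -/

def IsRankOneConnected (F : Matrix (Fin 3) (Fin 3) ℝ) (lam : ℝ) : Prop :=
  ∃ (R : Matrix (Fin 3) (Fin 3) ℝ) (n : Fin 3 → ℝ),
    IsSO3 R ∧ unitVec n ∧ Rᵀ * F * R = lam • F + (1 - lam) • outer n

lemma unitVec_iff_dotProduct_self (n : Fin 3 → ℝ) : unitVec n ↔ n ⬝ᵥ n = 1 := by
  simp [unitVec, dotProduct, Fin.sum_univ_three, sq]

lemma IsSO3.mul_transpose_self {P : Matrix (Fin 3) (Fin 3) ℝ} (hP : IsSO3 P) : P * Pᵀ = 1 :=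
  mul_eq_one_comm.mp hP.1

lemma IsSO3.conj {P R : Matrix (Fin 3) (Fin 3) ℝ} (hP : IsSO3 P) (hR : IsSO3 R) :
    IsSO3 (P * R * Pᵀ) := by
  refine ⟨?_, ?_⟩
  · simp only [transpose_mul, transpose_transpose, Matrix.mul_assoc]
    rw [← Matrix.mul_assoc Pᵀ P, hP.1, Matrix.one_mul, ← Matrix.mul_assoc Rᵀ R, hR.1,
      Matrix.one_mul, hP.mul_transpose_self]
  · rw [det_mul, det_mul, det_transpose, hP.2, hR.2, one_mul, one_mul]

lemma unitVec_mulVec {P : Matrix (Fin 3) (Fin 3) ℝ} (hP : IsSO3 P) {n : Fin 3 → ℝ}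
    (hn : unitVec n) : unitVec (P *ᵥ n) := by
  rw [unitVec_iff_dotProduct_self] at hn ⊢
  rw [dotProduct_mulVec, ← vecMul_transpose, vecMul_vecMul, hP.1, vecMul_one, hn]

lemma outer_conj (P : Matrix (Fin 3) (Fin 3) ℝ) (n : Fin 3 → ℝ) :
    P * outer n * Pᵀ = outer (P *ᵥ n) := by
  rw [outer, outer, mul_vecMulVec, vecMulVec_mul, vecMul_transpose]

lemma IsRankOneConnected.of_conj {F P : Matrix (Fin 3) (Fin 3) ℝ} {lam : ℝ} (hP : IsSO3 P)
    (h : IsRankOneConnected (Pᵀ * F * P) lam) : IsRankOneConnected F lam := by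
  obtain ⟨R, n, hR, hn, hRn⟩ := h
  refine ⟨P * R * Pᵀ, P *ᵥ n, hP.conj hR, unitVec_mulVec hP hn, ?_⟩
  calc (P * R * Pᵀ)ᵀ * F * (P * R * Pᵀ) = P * (Rᵀ * (Pᵀ * F * P) * R) * Pᵀ := by
        simp only [transpose_mul, transpose_transpose, Matrix.mul_assoc]
    _ = lam • ((P * Pᵀ) * F * (P * Pᵀ)) + (1 - lam) • (P * outer n * Pᵀ) := by
        rw [hRn]
        simp only [Matrix.mul_add, Matrix.add_mul, Matrix.mul_smul, Matrix.smul_mul,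
          Matrix.mul_assoc]
    _ = lam • F + (1 - lam) • outer (P *ᵥ n) := by
        rw [hP.mul_transpose_self, Matrix.one_mul, Matrix.mul_one, outer_conj]

lemma exists_mul_eq_of_sq_eq_mul {x y t : ℝ} (hxy : x + y = 1) (ht : t ^ 2 = x * y) :
    ∃ c s : ℝ, c ^ 2 = x ∧ s ^ 2 = y ∧ c * s = t := by
  have hx : 0 ≤ x := by nlinarith [sq_nonneg t]
  have hy : 0 ≤ y := by nlinarith [sq_nonneg t]
  have hcs : √x * √y = |t| := by rw [← Real.sqrt_mul hx, ← ht, Real.sqrt_sq_eq_abs]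
  refine ⟨√x, if 0 ≤ t then √y else -√y, Real.sq_sqrt hx, ?_, ?_⟩
  · split_ifs <;> simp [Real.sq_sqrt hy]
  · split_ifs with h
    · rw [hcs, abs_of_nonneg h]
    · rw [mul_neg, hcs, abs_of_neg (not_le.mp h), neg_neg]

lemma isSO3_rotation {c s : ℝ} (hcs : c ^ 2 + s ^ 2 = 1) :
    IsSO3 !![0, -1, 0; c, 0, -s; s, 0, c] := by
  constructor
  · ext i j
    fin_cases i <;> fin_cases j <;>
      simp [Matrix.mul_apply, Fin.sum_univ_three] <;>
      linarith
  · simp [det_fin_three]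
    linarith

lemma exists_isSO3_conj_diagonal_eq {m p q a b d : ℝ} (hpq : p ≠ q) (htr : a + d = p + q)
    (hdet : a * d - b ^ 2 = p * q) :
    ∃ R : Matrix (Fin 3) (Fin 3) ℝ, IsSO3 R ∧
      Rᵀ * diagonal ![m, p, q] * R = !![a, 0, b; 0, m, 0; b, 0, d] := by
  have hqp : q - p ≠ 0 := sub_ne_zero.mpr hpq.symm
  have hb : b ^ 2 = (q - a) * (a - p) := by linear_combination a * htr - hdet
  obtain ⟨c, s, hc, hs, hcs⟩ := exists_mul_eq_of_sq_eq_mul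
    (x := (q - a) / (q - p)) (y := (a - p) / (q - p)) (t := b / (q - p))
    (by field_simp; ring) (by field_simp; linear_combination hb)
  have hc' : (q - p) * c ^ 2 = q - a := by rw [hc]; field_simp
  have hs' : (q - p) * s ^ 2 = a - p := by rw [hs]; field_simp
  have hcs' : (q - p) * (c * s) = b := by rw [hcs]; field_simp
  refine ⟨_, isSO3_rotation (c := c) (s := s) (by rw [hc, hs]; field_simp; ring), ?_⟩
  ext i j
  fin_cases i <;> fin_cases j <;> simp [Matrix.mul_apply, Fin.sum_univ_three]
  all_goals apply mul_left_cancel₀ hqp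
  all_goals first
    | linear_combination p * hc' + q * hs'
    | linear_combination (q - p) * hcs'
    | linear_combination p * hs' + q * hc' - (q - p) * htr

lemma isRankOneConnected_diagonal {g1 g2 g3 lam u v : ℝ} (h23 : g2 ≠ g3)
    (hsum : g1 + g2 + g3 = 1) (hu : 0 ≤ u) (hv : 0 ≤ v) (huv : u + v = 1)
    (hmid : lam * g2 = g1)
    (hdet : lam ^ 2 * g1 * g3 + lam * (1 - lam) * (g3 * u + g1 * v) = g2 * g3) :
    IsRankOneConnected (diagonal ![g1, g2, g3]) lam := by
  have hsq : (√u * √v) ^ 2 = u * v := by rw [mul_pow, Real.sq_sqrt hu, Real.sq_sqrt hv]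
  obtain ⟨R, hR, hRF⟩ := exists_isSO3_conj_diagonal_eq (m := g1) (a := lam * g1 + (1 - lam) * u)
    (b := (1 - lam) * (√u * √v)) (d := lam * g3 + (1 - lam) * v) h23
    (by linear_combination (1 - lam) * huv + (lam - 1) * hsum - hmid)
    (by linear_combination hdet - (1 - lam) ^ 2 * hsq)
  refine ⟨R, ![√u, 0, √v], hR, ?_, ?_⟩
  · simp [unitVec, Real.sq_sqrt hu, Real.sq_sqrt hv, huv]
  · rw [hRF]
    ext i j
    fin_cases i <;> fin_cases j <;>
      simp [outer, Real.mul_self_sqrt hu, Real.mul_self_sqrt hv, hmid, mul_comm]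

lemma isRankOneConnected_diagonal_div {g1 g2 g3 : ℝ} (hg1 : 0 < g1) (hg2 : 0 < g2) (hg3 : 0 < g3)
    (hsum : g1 + g2 + g3 = 1) (h23 : g2 ≠ g3) (h13 : g1 ≠ g3)
    (hu : 0 ≤ (g2 * g3 - g1 ^ 2) / (g3 - g1)) (hv : 0 ≤ (g1 * g3 - g2 ^ 2) / (g3 - g1)) :
    IsRankOneConnected (diagonal ![g1, g2, g3]) (g1 / g2) := by
  have h31 : g3 - g1 ≠ 0 := sub_ne_zero.mpr h13.symm
  refine isRankOneConnected_diagonal (u := (g1 + g2) / g1 * ((g2 * g3 - g1 ^ 2) / (g3 - g1)))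
    (v := g3 / g1 * ((g1 * g3 - g2 ^ 2) / (g3 - g1))) h23 hsum
    (mul_nonneg (by positivity) hu) (mul_nonneg (by positivity) hv) ?_
    (div_mul_cancel₀ g1 hg2.ne') ?_
  · field_simp
    linear_combination g1 * (g3 - g1) * hsum
  · field_simp
    ring

lemma exists_isSO3_conj_diagonal_reverse (x y z : ℝ) :
    ∃ P : Matrix (Fin 3) (Fin 3) ℝ, IsSO3 P ∧
      Pᵀ * diagonal ![x, y, z] * P = diagonal ![z, y, x] := by
  refine ⟨!![0, 0, 1; 0, 1, 0; -1, 0, 0], ⟨?_, ?_⟩, ?_⟩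
  · ext i j
    fin_cases i <;> fin_cases j <;> simp [Matrix.mul_apply, Fin.sum_univ_three]
  · simp [det_fin_three]
  · ext i j
    fin_cases i <;> fin_cases j <;> simp [Matrix.mul_apply, Fin.sum_univ_three]

lemma exists_isRankOneConnected_diagonal {f1 f2 f3 : ℝ} (hf1 : 0 < f1) (hf12 : f1 < f2)
    (hf23 : f2 < f3) (hfsum : f1 + f2 + f3 = 1) :
    ∃ lam ≠ 1, IsRankOneConnected (diagonal ![f1, f2, f3]) lam := by
  have hf2 : 0 < f2 := hf1.trans hf12
  have hf3 : 0 < f3 := hf2.trans hf23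
  have hf13 : f1 < f3 := hf12.trans hf23
  rcases le_or_gt (f2 ^ 2) (f1 * f3) with h | h
  · refine ⟨f1 / f2, ((div_lt_one hf2).2 hf12).ne, ?_⟩
    exact isRankOneConnected_diagonal_div hf1 hf2 hf3 hfsum hf23.ne hf13.ne
      (div_nonneg (by nlinarith) (by linarith)) (div_nonneg (by linarith) (by linarith))
  · refine ⟨f3 / f2, ((one_lt_div hf2).2 hf23).ne', ?_⟩
    obtain ⟨P, hP, hPF⟩ := exists_isSO3_conj_diagonal_reverse f1 f2 f3
    refine IsRankOneConnected.of_conj hP ?_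
    rw [hPF]
    exact isRankOneConnected_diagonal_div hf3 hf2 hf1 (by linarith) hf12.ne' hf13.ne'
      (div_nonneg_of_nonpos (by nlinarith) (by linarith))
      (div_nonneg_of_nonpos (by linarith) (by linarith))

lemma setA_self_eq {f1 f2 f3 : ℝ} (hf1 : 0 < f1) (hf12 : f1 ≤ f2) (hf23 : f2 ≤ f3) :
    setA f1 f2 f3 f1 f2 f3 =
      Icc (max (f1 / f2) (f2 / f3)) (min (f2 / f1) (f3 / f2)) \ {1} := by
  have hf2 : 0 < f2 := hf1.trans_le hf12
  have hf3 : 0 < f3 := hf2.trans_le hf23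
  have hle : max (f1 / f2) (f2 / f3) ≤ 1 :=
    max_le ((div_le_one hf2).2 hf12) ((div_le_one hf3).2 hf23)
  have hge : 1 ≤ min (f2 / f1) (f3 / f2) :=
    le_min ((one_le_div hf1).2 hf12) ((one_le_div hf2).2 hf23)
  rw [setA, alphaMinus, alphaPlus, betaMinus, betaPlus, div_self hf1.ne', div_self hf2.ne',
    div_self hf3.ne', min_self, max_self, min_self, max_self, Icc_union_Icc_eq_Icc hle hge]

theorem statement2 (f1 f2 f3 : ℝ)
    (hf1 : 0 < f1) (hf12 : f1 < f2) (hf23 : f2 < f3) (hfsum : f1 + f2 + f3 = 1) :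
    setA f1 f2 f3 f1 f2 f3 =
      Set.Icc (max (f1 / f2) (f2 / f3)) (min (f2 / f1) (f3 / f2)) \ {1} ∧
    (setA f1 f2 f3 f1 f2 f3).Nonempty ∧
    ∃ (R : Matrix (Fin 3) (Fin 3) ℝ) (n : Fin 3 → ℝ) (lam : ℝ),
      IsSO3 R ∧ unitVec n ∧ lam ≠ 1 ∧
      Rᵀ * Matrix.diagonal ![f1, f2, f3] * R =
        lam • Matrix.diagonal ![f1, f2, f3] + (1 - lam) • outer n := by
  have hA := setA_self_eq hf1 hf12.le hf23.le
  have hf2 : 0 < f2 := hf1.trans hf12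
  have hmin : 1 < min (f2 / f1) (f3 / f2) :=
    lt_min ((one_lt_div hf1).2 hf12) ((one_lt_div hf2).2 hf23)
  have hmax : max (f1 / f2) (f2 / f3) < 1 :=
    max_lt ((div_lt_one hf2).2 hf12) ((div_lt_one (hf2.trans hf23)).2 hf23)
  obtain ⟨lam, hlam, R, n, hR, hn, hRn⟩ := exists_isRankOneConnected_diagonal hf1 hf12 hf23 hfsum
  refine ⟨hA, ?_, R, n, lam, hR, hn, hlam, hRn⟩
  rw [hA]
  exact ⟨min (f2 / f1) (f3 / f2), ⟨(hmax.trans hmin).le, le_rfl⟩, hmin.ne'⟩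
end
end

section
/- Let s₁, s₂, s₃ be real numbers with 0 < s₁ < s₂ < s₃ and s₁+s₂+s₃ = 1, and let b(x) := 6 s₂ x² + (s₁ s₃ − 3 s₂ − 4 s₂²) x + 2 s₂². Then b has two distinct real roots u_α < u_β, and they satisfy s₁ ≤ u_α < 1/3 < u_β ≤ s₃. (Proposition 3.2(i).) -/
open Matrix Set

noncomputable section

/-! The symmetric quadratic `b` is negative at `1/3` (where it equals `(s₁ - s₂)(s₃ - s₂)/3`) and
nonnegative at `s₁` and at `s₃`. A quadratic with positive leading coefficient that is negative
at `1/3` factors as `6 s₂ (x - u_α)(x - u_β)` with `u_α < 1/3 < u_β`, and a point where it is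
nonnegative lies outside `(u_α, u_β)`. -/

theorem quadratic_eq_mul_sub_mul_sub {K : Type*} [Field K] [NeZero (2 : K)] {a b c s : K}
    (ha : a ≠ 0) (h : discrim a b c = s * s) (x : K) :
    a * x ^ 2 + b * x + c = a * (x - (-b - s) / (2 * a)) * (x - (-b + s) / (2 * a)) := by
  rw [discrim] at h
  field_simp
  linear_combination -h

theorem Real.exists_quadratic_eq_mul_sub_mul_sub_of_neg {a b c m : ℝ} (ha : 0 < a)
    (hm : a * m ^ 2 + b * m + c < 0) :
    ∃ r₁ r₂, r₁ < m ∧ m < r₂ ∧ ∀ x, a * x ^ 2 + b * x + c = a * (x - r₁) * (x - r₂) := by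
  have hdiscrim : 0 ≤ discrim a b c := by
    rw [discrim]
    nlinarith [sq_nonneg (2 * a * m + b)]
  set s := √(discrim a b c)
  have hfactor := quadratic_eq_mul_sub_mul_sub ha.ne' (Real.mul_self_sqrt hdiscrim).symm
  have hr : (-b - s) / (2 * a) ≤ (-b + s) / (2 * a) := by
    gcongr
    linarith [Real.sqrt_nonneg (discrim a b c)]
  have hneg : (m - (-b - s) / (2 * a)) * (m - (-b + s) / (2 * a)) < 0 := by
    rw [hfactor, mul_assoc] at hm
    exact neg_of_mul_neg_right hm ha.le
  refine ⟨_, _, ?_, ?_, hfactor⟩ <;>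
  · rcases mul_neg_iff.1 hneg with h | h <;> linarith [h.1, h.2]

theorem le_or_le_of_mul_sub_mul_sub_nonneg {a r₁ r₂ p : ℝ} (ha : 0 < a)
    (hp : 0 ≤ a * (p - r₁) * (p - r₂)) : p ≤ r₁ ∨ r₂ ≤ p := by
  by_contra! h
  have := mul_neg_of_pos_of_neg (mul_pos ha (sub_pos.2 h.1)) (sub_neg.2 h.2)
  linarith

theorem bpoly_comm (s1 s2 s3 x : ℝ) : bpoly s1 s2 s3 x = bpoly s3 s2 s1 x := by
  unfold bpoly
  ring

theorem bpoly_one_third_neg {s1 s2 s3 : ℝ} (hsum : s1 + s2 + s3 = 1) (hs12 : s1 < s2)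
    (hs23 : s2 < s3) : bpoly s1 s2 s3 (1 / 3) < 0 := by
  have key : bpoly s1 s2 s3 (1 / 3) = (s1 - s2) * (s3 - s2) / 3 := by
    unfold bpoly
    linear_combination (s2 / 3) * hsum
  rw [key]
  exact div_neg_of_neg_of_pos (mul_neg_of_neg_of_pos (by linarith) (by linarith)) three_pos

theorem bpoly_self_nonneg {s1 s2 s3 : ℝ} (hsum : s1 + s2 + s3 = 1) (hs2 : 0 ≤ s2) (hs3 : 0 ≤ s3)
    (h : 0 ≤ (s2 - s1) * (s3 - s1)) : 0 ≤ bpoly s1 s2 s3 s1 := by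
  have key : bpoly s1 s2 s3 s1 =
      2 * s2 * (s2 - s1) ^ 2 + s2 * ((s2 - s1) * (s3 - s1)) + s3 * (s2 - s1) ^ 2 := by
    unfold bpoly
    linear_combination (3 * s1 * s2 - 2 * s2 ^ 2) * hsum
  rw [key]
  have := mul_nonneg hs2 h
  positivity

theorem statement3 (s1 s2 s3 : ℝ)
    (hs1 : 0 < s1) (hs12 : s1 < s2) (hs23 : s2 < s3) (hsum : s1 + s2 + s3 = 1) :
    ∃ ua ub : ℝ, ua < ub ∧
      bpoly s1 s2 s3 ua = 0 ∧ bpoly s1 s2 s3 ub = 0 ∧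
      (∀ x : ℝ, bpoly s1 s2 s3 x = 0 → x = ua ∨ x = ub) ∧
      s1 ≤ ua ∧ ua < 1 / 3 ∧ 1 / 3 < ub ∧ ub ≤ s3 := by
  have hs2 : 0 < s2 := hs1.trans hs12
  obtain ⟨ua, ub, hua, hub, hfactor⟩ := Real.exists_quadratic_eq_mul_sub_mul_sub_of_neg
    (by positivity) (bpoly_one_third_neg hsum hs12 hs23)
  have hb (x : ℝ) : bpoly s1 s2 s3 x = 6 * s2 * (x - ua) * (x - ub) := hfactor x
  have hb_s1 : 0 ≤ bpoly s1 s2 s3 s1 :=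
    bpoly_self_nonneg hsum hs2.le (by linarith) (mul_nonneg (by linarith) (by linarith))
  have hb_s3 : 0 ≤ bpoly s1 s2 s3 s3 := by
    rw [bpoly_comm]
    exact bpoly_self_nonneg (by linarith) hs2.le hs1.le
      (mul_nonneg_of_nonpos_of_nonpos (by linarith) (by linarith))
  refine ⟨ua, ub, hua.trans hub, by simp [hb], by simp [hb], fun x hx => ?_, ?_, hua, hub, ?_⟩
  · simpa [hb, hs2.ne', sub_eq_zero] using hx
  · exact (le_or_le_of_mul_sub_mul_sub_nonneg (by positivity) (hb s1 ▸ hb_s1)).resolve_right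
      (by linarith)
  · exact (le_or_le_of_mul_sub_mul_sub_nonneg (by positivity) (hb s3 ▸ hb_s3)).resolve_left
      (by linarith)
end
end

section
/- Let F = diag(f₁,f₂,f₃) with 0 < f₁ < f₂ < f₃ and tr F = 1, let G be a real symmetric 3×3 matrix with tr G = 1, let λ ∈ ℝ \ {0,1}, let n ∈ ℝ³ be a unit vector and R ∈ SO(3) with Rᵀ G R = λ F + (1−λ) n⊗n. Then n₁²(f₂+f₃) + n₂²(f₃+f₁) + n₃²(f₁+f₂) = (i₂(G) − λ² i₂(F)) / (λ(1−λ)) and n₁² f₂ f₃ + n₂² f₃ f₁ + n₃² f₁ f₂ = (i₃(G) − λ³ i₃(F)) / (λ²(1−λ)). (Identities (coeff) in the proof of Lemma 6.1.) -/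
open Matrix Set

noncomputable section

/-! Both `i₂` and `i₃` are invariant under conjugation by `R ∈ O(3)`, so they may be computed on
`λ F + (1 − λ) n⊗n`. Because `n⊗n` has rank one, expanding `i₂` and `i₃` of this sum in `1 − λ`
stops at the first order, and for `F` diagonal the first-order coefficients are the two
weighted sums of the `nᵢ²`. -/

theorem trace_transpose_mul_mul {m α : Type*} [Fintype m] [DecidableEq m] [CommRing α]
    {R : Matrix m m α} (hR : Rᵀ * R = 1) (A : Matrix m m α) :
    trace (Rᵀ * A * R) = trace A := by
  rw [trace_mul_cycle, mul_eq_one_comm.mp hR, Matrix.one_mul]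

section Invariants

variable {R : Matrix (Fin 3) (Fin 3) ℝ}

theorem i2_transpose_mul_mul (hR : Rᵀ * R = 1) (G : Matrix (Fin 3) (Fin 3) ℝ) :
    i2 (Rᵀ * G * R) = i2 G := by
  have hsq : Rᵀ * G * R * (Rᵀ * G * R) = Rᵀ * (G * G) * R := by
    simp only [Matrix.mul_assoc]
    rw [← Matrix.mul_assoc R, mul_eq_one_comm.mp hR, Matrix.one_mul]
  rw [i2, i2, hsq, trace_transpose_mul_mul hR, trace_transpose_mul_mul hR]

theorem i3_transpose_mul_mul (hR : Rᵀ * R = 1) (G : Matrix (Fin 3) (Fin 3) ℝ) :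
    i3 (Rᵀ * G * R) = i3 G := by
  have hdet : Rᵀ.det * R.det = 1 := by rw [← det_mul, hR, det_one]
  rw [i3, i3, det_mul, det_mul, mul_right_comm, hdet, one_mul]

end Invariants

section DiagonalPlusOuter

variable (a b f1 f2 f3 : ℝ) (n : Fin 3 → ℝ)

theorem i2_diagonal_s6 : i2 (Matrix.diagonal ![f1, f2, f3]) = f1 * f2 + f2 * f3 + f3 * f1 := by
  simp only [i2, trace_fin_three, diagonal_mul_diagonal, diagonal_apply_eq, cons_val_zero,
    cons_val_one, cons_val_two, head_cons, tail_cons]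
  ring

theorem i3_diagonal : i3 (Matrix.diagonal ![f1, f2, f3]) = f1 * f2 * f3 := by
  rw [i3, det_diagonal, Fin.prod_univ_three]
  rfl

theorem i2_smul_diagonal_add_smul_outer_s6 :
    i2 (a • diagonal ![f1, f2, f3] + b • outer n) =
      a ^ 2 * i2 (Matrix.diagonal ![f1, f2, f3]) +
        a * b * (n 0 ^ 2 * (f2 + f3) + n 1 ^ 2 * (f3 + f1) + n 2 ^ 2 * (f1 + f2)) := by
  rw [i2_diagonal_s6]
  simp only [i2, outer, trace_add, trace_smul, trace_vecMulVec, trace_fin_three, dotProduct,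
    Fin.sum_univ_three, mul_apply, Matrix.add_apply, Matrix.smul_apply, vecMulVec_apply,
    Matrix.diagonal, of_apply, cons_val, ↓reduceIte, Fin.reduceEq, smul_eq_mul, mul_zero,
    zero_add]
  ring

theorem i3_smul_diagonal_add_smul_outer :
    i3 (a • diagonal ![f1, f2, f3] + b • outer n) =
      a ^ 3 * i3 (Matrix.diagonal ![f1, f2, f3]) +
        a ^ 2 * b * (n 0 ^ 2 * f2 * f3 + n 1 ^ 2 * f3 * f1 + n 2 ^ 2 * f1 * f2) := by
  rw [i3_diagonal]
  simp only [i3, outer, det_fin_three, Matrix.add_apply, Matrix.smul_apply, vecMulVec_apply,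
    Matrix.diagonal, of_apply, cons_val, ↓reduceIte, Fin.reduceEq, smul_eq_mul, mul_zero,
    zero_add]
  ring

end DiagonalPlusOuter

theorem statement6_general (f1 f2 f3 : ℝ)
    (F : Matrix (Fin 3) (Fin 3) ℝ) (hF : F = Matrix.diagonal ![f1, f2, f3])
    (G : Matrix (Fin 3) (Fin 3) ℝ)
    (lam : ℝ) (hlam0 : lam ≠ 0) (hlam1 : lam ≠ 1)
    (n : Fin 3 → ℝ)
    (R : Matrix (Fin 3) (Fin 3) ℝ) (hR : IsSO3 R)
    (heq : Rᵀ * G * R = lam • F + (1 - lam) • outer n) :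
    n 0 ^ 2 * (f2 + f3) + n 1 ^ 2 * (f3 + f1) + n 2 ^ 2 * (f1 + f2) =
      (i2 G - lam ^ 2 * i2 F) / (lam * (1 - lam)) ∧
    n 0 ^ 2 * f2 * f3 + n 1 ^ 2 * f3 * f1 + n 2 ^ 2 * f1 * f2 =
      (i3 G - lam ^ 3 * i3 F) / (lam ^ 2 * (1 - lam)) := by
  subst hF
  have hlam1' : 1 - lam ≠ 0 := sub_ne_zero.mpr hlam1.symm
  rw [← i2_transpose_mul_mul hR.1, ← i3_transpose_mul_mul hR.1, heq,
    i2_smul_diagonal_add_smul_outer_s6, i3_smul_diagonal_add_smul_outer]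
  constructor <;> field_simp <;> ring

theorem statement6 (f1 f2 f3 : ℝ)
    (hf1 : 0 < f1) (hf12 : f1 < f2) (hf23 : f2 < f3) (hfsum : f1 + f2 + f3 = 1)
    (F : Matrix (Fin 3) (Fin 3) ℝ) (hF : F = Matrix.diagonal ![f1, f2, f3])
    (G : Matrix (Fin 3) (Fin 3) ℝ) (hGsym : Gᵀ = G) (hGtr : Matrix.trace G = 1)
    (lam : ℝ) (hlam0 : lam ≠ 0) (hlam1 : lam ≠ 1)
    (n : Fin 3 → ℝ) (hn : unitVec n)
    (R : Matrix (Fin 3) (Fin 3) ℝ) (hR : IsSO3 R)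
    (heq : Rᵀ * G * R = lam • F + (1 - lam) • outer n) :
    n 0 ^ 2 * (f2 + f3) + n 1 ^ 2 * (f3 + f1) + n 2 ^ 2 * (f1 + f2) =
      (i2 G - lam ^ 2 * i2 F) / (lam * (1 - lam)) ∧
    n 0 ^ 2 * f2 * f3 + n 1 ^ 2 * f3 * f1 + n 2 ^ 2 * f1 * f2 =
      (i3 G - lam ^ 3 * i3 F) / (lam ^ 2 * (1 - lam)) :=
  statement6_general f1 f2 f3 F hF G lam hlam0 hlam1 n R hR heq
end
end

section
/- Let F = diag(f₁,f₂,f₃) with 0 < f₁ < f₂ < f₃ and tr F = 1, let G be a real symmetric 3×3 matrix with tr G = 1, let λ ∈ ℝ \ {0,1}, let n ∈ ℝ³ be a unit vector and R ∈ SO(3) with Rᵀ G R = λ F + (1−λ) n⊗n. Write x_F := i₂(F), x_G := i₂(G), y_F := i₃(F), y_G := i₃(G). Then for every t ∈ [0,1], setting η := η(λ,t) and M(t) := η F + (1−η) n⊗n, one has i₂(M(t)) = ((x_G − λ² x_F)/(λ(1−λ))) η − ((x_G − λ x_F)/(λ(1−λ))) η² and i₃(M(t)) = ((y_G − λ³ y_F)/(λ²(1−λ)))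 η² − ((y_G − λ² y_F)/(λ²(1−λ))) η³. (Lemma 6.1, formula (s92).) -/
open Matrix Set

noncomputable section

/-!
Both invariants are unchanged under orthogonal conjugation, so `i₂ G` and `i₃ G` are the invariants
of `λ F + (1 - λ) n⊗n`. As `n⊗n` has rank one, `i₂ (η F + (1 - η) n⊗n) = η² i₂ F + η (1 - η) c` and
`i₃ (η F + (1 - η) n⊗n) = η³ i₃ F + η² (1 - η) d` with `c`, `d` independent of `η`; evaluating at
`η = λ` expresses `c` and `d` through the invariants of `G`.
-/

lemma i2_conj_of_orthogonal (G R : Matrix (Fin 3) (Fin 3) ℝ) (hR : Rᵀ * R = 1) :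
    i2 (Rᵀ * G * R) = i2 G := by
  have hRR : R * Rᵀ = 1 := mul_eq_one_comm.mp hR
  have hsq : Rᵀ * G * R * (Rᵀ * G * R) = Rᵀ * (G * G) * R := by
    simp only [Matrix.mul_assoc, ← Matrix.mul_assoc R Rᵀ, hRR, Matrix.one_mul]
  rw [i2, i2, hsq, trace_mul_cycle, hRR, Matrix.one_mul, trace_mul_cycle Rᵀ (G * G), hRR,
    Matrix.one_mul]

lemma i3_conj_of_orthogonal (G R : Matrix (Fin 3) (Fin 3) ℝ) (hR : Rᵀ * R = 1) :
    i3 (Rᵀ * G * R) = i3 G := by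
  have hdet : Rᵀ.det * R.det = 1 := by rw [← det_mul, hR, det_one]
  rw [i3, i3, det_mul, det_mul, mul_right_comm, hdet, one_mul]

lemma i2_smul_add_smul_vecMulVec (A : Matrix (Fin 3) (Fin 3) ℝ) (u v : Fin 3 → ℝ) (a b : ℝ) :
    i2 (a • A + b • vecMulVec u v) =
      a ^ 2 * i2 A + a * b * (trace A * (u ⬝ᵥ v) - trace (A * vecMulVec u v)) := by
  simp only [i2, trace_add, trace_smul, add_mul, mul_add, smul_mul_assoc, mul_smul_comm,
    vecMulVec_mul_vecMulVec, trace_vecMulVec, dotProduct_smul, smul_eq_mul,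
    trace_mul_comm (vecMulVec u v) A, dotProduct_comm v u]
  ring

/-- The matrix determinant lemma for a rank-one perturbation, in adjugate form. -/
lemma i3_smul_add_smul_vecMulVec (A : Matrix (Fin 3) (Fin 3) ℝ) (u v : Fin 3 → ℝ) (a b : ℝ) :
    i3 (a • A + b • vecMulVec u v) = a ^ 3 * i3 A + a ^ 2 * b * (v ⬝ᵥ (adjugate A *ᵥ u)) := by
  simp only [i3, det_fin_three, adjugate_fin_three, Matrix.add_apply, Matrix.smul_apply,
    vecMulVec_apply, smul_eq_mul, dotProduct, mulVec, Fin.sum_univ_three, of_apply, cons_val',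
    cons_val_zero, cons_val_one, cons_val_two, head_cons, tail_cons, empty_val',
    cons_val_fin_one, head_fin_const]
  ring

theorem statement7_general
    (F : Matrix (Fin 3) (Fin 3) ℝ)
    (G : Matrix (Fin 3) (Fin 3) ℝ)
    (lam : ℝ) (hlam0 : lam ≠ 0) (hlam1 : lam ≠ 1)
    (n : Fin 3 → ℝ)
    (R : Matrix (Fin 3) (Fin 3) ℝ) (hR : IsSO3 R)
    (heq : Rᵀ * G * R = lam • F + (1 - lam) • outer n) :
    ∀ t ∈ Set.Icc (0 : ℝ) 1,
      i2 (Mcurve F n lam t) =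
        ((i2 G - lam ^ 2 * i2 F) / (lam * (1 - lam))) * etaFun lam t -
          ((i2 G - lam * i2 F) / (lam * (1 - lam))) * etaFun lam t ^ 2 ∧
      i3 (Mcurve F n lam t) =
        ((i3 G - lam ^ 3 * i3 F) / (lam ^ 2 * (1 - lam))) * etaFun lam t ^ 2 -
          ((i3 G - lam ^ 2 * i3 F) / (lam ^ 2 * (1 - lam))) * etaFun lam t ^ 3 := by
  intro t _
  have hG2 : i2 G = i2 (lam • F + (1 - lam) • outer n) := by
    rw [← heq, i2_conj_of_orthogonal G R hR.1]
  have hG3 : i3 G = i3 (lam • F + (1 - lam) • outer n) := by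
    rw [← heq, i3_conj_of_orthogonal G R hR.1]
  have hlam1' : 1 - lam ≠ 0 := sub_ne_zero.mpr hlam1.symm
  rw [hG2, hG3, Mcurve, outer, i2_smul_add_smul_vecMulVec, i2_smul_add_smul_vecMulVec,
    i3_smul_add_smul_vecMulVec, i3_smul_add_smul_vecMulVec]
  constructor <;> field_simp <;> ring

theorem statement7 (f1 f2 f3 : ℝ)
    (hf1 : 0 < f1) (hf12 : f1 < f2) (hf23 : f2 < f3) (hfsum : f1 + f2 + f3 = 1)
    (F : Matrix (Fin 3) (Fin 3) ℝ) (hF : F = Matrix.diagonal ![f1, f2, f3])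
    (G : Matrix (Fin 3) (Fin 3) ℝ) (hGsym : Gᵀ = G) (hGtr : Matrix.trace G = 1)
    (lam : ℝ) (hlam0 : lam ≠ 0) (hlam1 : lam ≠ 1)
    (n : Fin 3 → ℝ) (hn : unitVec n)
    (R : Matrix (Fin 3) (Fin 3) ℝ) (hR : IsSO3 R)
    (heq : Rᵀ * G * R = lam • F + (1 - lam) • outer n) :
    ∀ t ∈ Set.Icc (0 : ℝ) 1,
      i2 (Mcurve F n lam t) =
        ((i2 G - lam ^ 2 * i2 F) / (lam * (1 - lam))) * etaFun lam t -
          ((i2 G - lam * i2 F) / (lam * (1 - lam))) * etaFun lam t ^ 2 ∧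
      i3 (Mcurve F n lam t) =
        ((i3 G - lam ^ 3 * i3 F) / (lam ^ 2 * (1 - lam))) * etaFun lam t ^ 2 -
          ((i3 G - lam ^ 2 * i3 F) / (lam ^ 2 * (1 - lam))) * etaFun lam t ^ 3 :=
  statement7_general F G lam hlam0 hlam1 n R hR heq
end
end

section
/- Let u_α be the smallest root of b. Then (2/3) s₂ < u_α < (s₁ + 2 s₂)/3; in particular 3u_α − 2s₂ > 0 and s₁ + 2s₂ − 3u_α > 0. (Claims established in the proofs of Proposition 5.2 and Proposition 7.1.) -/
open Matrix Set

noncomputable section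

/-! At the two bounds, `b(2s₂/3) = (2/3) s₁s₂s₃ > 0` and, using `s₁ + s₂ + s₃ = 1`,
`b((s₁ + 2s₂)/3) = -s₁(s₂ - s₁)(s₃ - s₂)/3 < 0`. So a root lies strictly between them, and since `b`
is convex it cannot vanish to the left of a point where it is positive and after which it becomes
negative. -/

theorem ConvexOn.mem_Ioo_of_isLeast_zero {f : ℝ → ℝ} (hf : ConvexOn ℝ univ f) {p q u : ℝ}
    (hpq : p ≤ q) (hp : 0 < f p) (hq : f q < 0) (hu : IsLeast {x | f x = 0} u) :
    u ∈ Ioo p q := by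
  obtain ⟨x, ⟨-, hxq⟩, hx⟩ : (0 : ℝ) ∈ f '' Ioo p q :=
    intermediate_value_Ioo' hpq ((hf.continuousOn isOpen_univ).mono (subset_univ _)) ⟨hq, hp⟩
  refine ⟨?_, (hu.2 hx).trans_lt hxq⟩
  by_contra! hup
  have hqp : f q ≤ f p := (hq.trans hp).le
  have hpq' : p < q := hpq.lt_of_ne (ne_of_apply_ne f (hq.trans hp).ne')
  have hpu : f p ≤ f u := hf.le_left_of_right_le'' (mem_univ u) (mem_univ q) hup hpq' hqp
  linarith [hu.1.out]

theorem convexOn_quadratic {a : ℝ} (ha : 0 ≤ a) (b c : ℝ) :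
    ConvexOn ℝ univ fun x : ℝ => a * x ^ 2 + b * x + c :=
  ((((Even.convexOn_pow even_two).smul ha).add
    ((LinearMap.lsmul ℝ ℝ b).convexOn convex_univ)).add_const c)

theorem bpoly_two_thirds_mul (s1 s2 s3 : ℝ) :
    bpoly s1 s2 s3 (2 / 3 * s2) = 2 / 3 * (s1 * s2 * s3) := by
  unfold bpoly; ring

theorem bpoly_add_two_mul_div_three {s1 s2 s3 : ℝ} (hsum : s1 + s2 + s3 = 1) :
    bpoly s1 s2 s3 ((s1 + 2 * s2) / 3) = -(s1 * (s2 - s1) * (s3 - s2)) / 3 := by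
  obtain rfl : s3 = 1 - s1 - s2 := by linarith
  unfold bpoly; ring

theorem statement10 (s1 s2 s3 ua : ℝ)
    (hs1 : 0 < s1) (hs12 : s1 < s2) (hs23 : s2 < s3) (hsum : s1 + s2 + s3 = 1)
    (hua : bpoly s1 s2 s3 ua = 0) (huamin : ∀ x : ℝ, bpoly s1 s2 s3 x = 0 → ua ≤ x) :
    2 / 3 * s2 < ua ∧ ua < (s1 + 2 * s2) / 3 ∧
    3 * ua - 2 * s2 > 0 ∧ s1 + 2 * s2 - 3 * ua > 0 := by
  have hs2 : 0 < s2 := hs1.trans hs12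
  have hconvex : ConvexOn ℝ univ (bpoly s1 s2 s3) :=
    convexOn_quadratic (by positivity) _ _
  have hleft : 0 < bpoly s1 s2 s3 (2 / 3 * s2) := by
    rw [bpoly_two_thirds_mul]; have := hs2.trans hs23; positivity
  have hright : bpoly s1 s2 s3 ((s1 + 2 * s2) / 3) < 0 := by
    rw [bpoly_add_two_mul_div_three hsum, neg_div, neg_lt_zero]
    have := sub_pos.2 hs12; have := sub_pos.2 hs23; positivity
  obtain ⟨hlow, hup⟩ :=
    hconvex.mem_Ioo_of_isLeast_zero (by linarith) hleft hright ⟨hua, huamin⟩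
  exact ⟨hlow, hup, by linarith, by linarith⟩
end
end

section
/- With E₂(t) := s₂ α/(α + t(1−α)) and r(p,q) := (E₂(p)/E₂(q))·((2u_α − E₂(p))/(2u_α − E₂(q))), the following hold: (a) 3u_α − 2E₂(q) > 0 for every q ∈ [0,1]; (b) for all 0 ≤ p < q ≤ 1 and every λ ∈ ℝ, 1 − λ(2−λ) r(p,q) > 0; (c) for p = q and every λ ≠ 1, 1 − λ(2−λ) r(p,p) > 0. (Proposition 5.2.) -/
open Matrix Set

noncomputable section

/-! The root condition `b(u_α) = 0` factors as `s₁ s₃ u_α = s₂ (3u_α − 2s₂)(1 − 2u_α)`, which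
forces `α > 2/3`, while `b(s₂) = s₂ (s₂ − s₁)(s₂ − s₃) < 0` gives `α ≠ 1`. Writing
`E₂ = s₂ η(α, ·)`, all values of `η(α, ·)` on `[0,1]` lie between `α` and `1`, hence below `3α/2`; this is (a).
Moreover `η(α,t) − α = α(1−α)(1−t)/(α + t(1−α))` moves strictly towards `α` as `t` grows, so
`r(p,q) = (u_α² − (E₂ p − u_α)²)/(u_α² − (E₂ q − u_α)²) ∈ [0,1)` for `p < q`, and `r(p,p) = 1`.
Finally `1 − λ(2−λ) r = (1 − r) + r (1 − λ)²`. -/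

lemma mul_mul_eq_of_bpoly_eq_zero {s1 s2 s3 x : ℝ} (h : bpoly s1 s2 s3 x = 0) :
    s1 * s3 * x = s2 * (3 * x - 2 * s2) * (1 - 2 * x) := by
  unfold bpoly at h
  linear_combination h

lemma two_mul_lt_three_mul_of_bpoly_eq_zero {s1 s2 s3 x : ℝ} (hs1 : 0 < s1) (hs2 : 0 < s2)
    (hs3 : 0 < s3) (hx : 0 < x) (hx2 : x < 1 / 2) (h : bpoly s1 s2 s3 x = 0) :
    2 * s2 < 3 * x := by
  have hprod := mul_mul_eq_of_bpoly_eq_zero h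
  by_contra! hle
  nlinarith [mul_pos (mul_pos hs1 hs3) hx,
    mul_nonneg (mul_nonneg hs2.le (sub_nonneg.2 hle)) (by linarith : (0 : ℝ) ≤ 1 - 2 * x)]

lemma bpoly_self {s1 s2 s3 : ℝ} (hsum : s1 + s2 + s3 = 1) :
    bpoly s1 s2 s3 s2 = s2 * (s2 - s1) * (s2 - s3) := by
  unfold bpoly
  linear_combination s2 ^ 2 * hsum

lemma bpoly_self_neg {s1 s2 s3 : ℝ} (hs2 : 0 < s2) (hs12 : s1 < s2) (hs23 : s2 < s3)
    (hsum : s1 + s2 + s3 = 1) : bpoly s1 s2 s3 s2 < 0 := by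
  rw [bpoly_self hsum]
  exact mul_neg_of_pos_of_neg (mul_pos hs2 (sub_pos.2 hs12)) (sub_neg.2 hs23)

/-- `α + t(1 − α)` is a convex combination of `α` and `1`. -/
lemma lt_add_mul_one_sub {c α t : ℝ} (hcα : c < α) (hc1 : c < 1) (ht0 : 0 ≤ t)
    (ht1 : t ≤ 1) : c < α + t * (1 - α) := by
  rcases le_total α 1 with h | h
  · nlinarith [mul_nonneg ht0 (sub_nonneg.2 h)]
  · nlinarith [mul_nonneg (sub_nonneg.2 ht1) (sub_nonneg.2 h)]

lemma etaFun_pos {α t : ℝ} (hα : 0 < α) (ht0 : 0 ≤ t) (ht1 : t ≤ 1) : 0 < etaFun α t :=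
  div_pos hα (lt_add_mul_one_sub hα one_pos ht0 ht1)

lemma two_mul_etaFun_lt {α t : ℝ} (hα : 2 / 3 < α) (ht0 : 0 ≤ t) (ht1 : t ≤ 1) :
    2 * etaFun α t < 3 * α := by
  have hD := lt_add_mul_one_sub hα (by norm_num) ht0 ht1
  rw [etaFun, mul_div_assoc', div_lt_iff₀ (by linarith)]
  nlinarith

lemma etaFun_sub_self {α t : ℝ} (hD : α + t * (1 - α) ≠ 0) :
    etaFun α t - α = α * (1 - α) * ((1 - t) / (α + t * (1 - α))) := by
  rw [etaFun]
  field_simp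
  ring

lemma strictAntiOn_one_sub_div {α : ℝ} (hα : 0 < α) :
    StrictAntiOn (fun t => (1 - t) / (α + t * (1 - α))) (Icc 0 1) := by
  intro p ⟨hp0, hp1⟩ q ⟨hq0, hq1⟩ hpq
  rw [div_lt_div_iff₀ (lt_add_mul_one_sub hα one_pos hq0 hq1)
    (lt_add_mul_one_sub hα one_pos hp0 hp1)]
  have hcross : (1 - p) * (α + q * (1 - α)) - (1 - q) * (α + p * (1 - α)) = q - p := by ring
  linarith

lemma abs_etaFun_sub_self_lt {α p q : ℝ} (hα : 0 < α) (hα1 : α ≠ 1) (hp : 0 ≤ p)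
    (hpq : p < q) (hq : q ≤ 1) : |etaFun α q - α| < |etaFun α p - α| := by
  have hDp := lt_add_mul_one_sub hα one_pos hp (hpq.le.trans hq)
  have hDq := lt_add_mul_one_sub hα one_pos (hp.trans hpq.le) hq
  rw [etaFun_sub_self hDp.ne', etaFun_sub_self hDq.ne', abs_mul (α * (1 - α)),
    abs_mul (α * (1 - α)), abs_of_nonneg (div_nonneg (by linarith) hDp.le),
    abs_of_nonneg (div_nonneg (by linarith) hDq.le)]
  refine mul_lt_mul_of_pos_left ?_ (abs_pos.2 (mul_ne_zero hα.ne' (sub_ne_zero.2 hα1.symm)))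
  exact strictAntiOn_one_sub_div hα ⟨hp, hpq.le.trans hq⟩ ⟨hp.trans hpq.le, hq⟩ hpq

/-- `x (2a − x) = a² − (x − a)²` decreases with the distance from `a`. -/
lemma div_mul_div_lt_one_of_abs_sub_lt {a x y : ℝ} (hy : 0 < y) (hy2 : y < 2 * a)
    (h : |y - a| < |x - a|) : x / y * ((2 * a - x) / (2 * a - y)) < 1 := by
  rw [div_mul_div_comm, div_lt_one (mul_pos hy (by linarith))]
  nlinarith [sq_lt_sq.2 h]

lemma one_sub_mul_two_sub_mul_pos {lam r : ℝ} (hr0 : 0 ≤ r) (hr1 : r < 1) :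
    0 < 1 - lam * (2 - lam) * r := by
  nlinarith [mul_nonneg hr0 (sq_nonneg (1 - lam))]

lemma one_sub_mul_two_sub_pos {lam : ℝ} (h : lam ≠ 1) : 0 < 1 - lam * (2 - lam) := by
  nlinarith [sq_pos_of_ne_zero (sub_ne_zero.2 h)]

theorem statement11_general (s1 s2 s3 ua : ℝ)
    (hs1 : 0 < s1) (hs12 : s1 < s2) (hs23 : s2 < s3) (hsum : s1 + s2 + s3 = 1)
    (hua : bpoly s1 s2 s3 ua = 0)
    (hua1 : s1 ≤ ua) (hua2 : ua < 1 / 3)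
    (E2 : ℝ → ℝ) (hE2 : ∀ t : ℝ, E2 t = s2 * (ua / s2) / (ua / s2 + t * (1 - ua / s2))) :
    (∀ q ∈ Set.Icc (0 : ℝ) 1, 3 * ua - 2 * E2 q > 0) ∧
    (∀ p q : ℝ, 0 ≤ p → p < q → q ≤ 1 → ∀ lam : ℝ,
      1 - lam * (2 - lam) * ((E2 p / E2 q) * ((2 * ua - E2 p) / (2 * ua - E2 q))) > 0) ∧
    (∀ p ∈ Set.Icc (0 : ℝ) 1, ∀ lam : ℝ, lam ≠ 1 →
      1 - lam * (2 - lam) * ((E2 p / E2 p) * ((2 * ua - E2 p) / (2 * ua - E2 p))) > 0) := by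
  have hs2 : 0 < s2 := hs1.trans hs12
  have hua0 : 0 < ua := hs1.trans_le hua1
  set α := ua / s2 with hα_def
  have hα : 2 / 3 < α := by
    rw [hα_def, lt_div_iff₀ hs2]
    linarith [two_mul_lt_three_mul_of_bpoly_eq_zero hs1 hs2 (hs2.trans hs23) hua0
      (by linarith) hua]
  have hα1 : α ≠ 1 := by
    rw [Ne, hα_def, div_eq_one_iff_eq hs2.ne']
    rintro rfl
    exact (bpoly_self_neg hs2 hs12 hs23 hsum).ne hua
  have hE : ∀ t, E2 t = s2 * etaFun α t := fun t => by rw [hE2, mul_div_assoc, etaFun]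
  have hua_eq : ua = s2 * α := (mul_div_cancel₀ ua hs2.ne').symm
  have hE_pos : ∀ t ∈ Icc (0 : ℝ) 1, 0 < E2 t := fun t ht => by
    rw [hE]; exact mul_pos hs2 (etaFun_pos (by linarith) ht.1 ht.2)
  have hE_lt : ∀ t ∈ Icc (0 : ℝ) 1, 2 * E2 t < 3 * ua := fun t ht => by
    rw [hE, hua_eq]; nlinarith [two_mul_etaFun_lt hα ht.1 ht.2]
  have hE_lt_two : ∀ t ∈ Icc (0 : ℝ) 1, E2 t < 2 * ua := fun t ht => by
    linarith [hE_lt t ht, hE_pos t ht]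
  refine ⟨fun q hq => by linarith [hE_lt q hq], fun p q hp hpq hq lam => ?_,
    fun p hp lam hlam => ?_⟩
  · have hp' : p ∈ Icc (0 : ℝ) 1 := ⟨hp, hpq.le.trans hq⟩
    have hq' : q ∈ Icc (0 : ℝ) 1 := ⟨hp.trans hpq.le, hq⟩
    have hdist : |E2 q - ua| < |E2 p - ua| := by
      rw [hE, hE, hua_eq, ← mul_sub, ← mul_sub, abs_mul, abs_mul, abs_of_pos hs2]
      exact mul_lt_mul_of_pos_left (abs_etaFun_sub_self_lt (by linarith) hα1 hp hpq hq) hs2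
    refine gt_iff_lt.2 (one_sub_mul_two_sub_mul_pos ?_ ?_)
    · exact mul_nonneg (div_nonneg (hE_pos p hp').le (hE_pos q hq').le)
        (div_nonneg (sub_nonneg.2 (hE_lt_two p hp').le) (sub_nonneg.2 (hE_lt_two q hq').le))
    · exact div_mul_div_lt_one_of_abs_sub_lt (hE_pos q hq') (hE_lt_two q hq') hdist
  · rw [div_self (hE_pos p hp).ne', div_self (sub_ne_zero.2 (hE_lt_two p hp).ne'), mul_one, mul_one]
    exact one_sub_mul_two_sub_pos hlam

theorem statement11 (s1 s2 s3 ua : ℝ)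
    (hs1 : 0 < s1) (hs12 : s1 < s2) (hs23 : s2 < s3) (hsum : s1 + s2 + s3 = 1)
    (hua : bpoly s1 s2 s3 ua = 0) (huamin : ∀ x : ℝ, bpoly s1 s2 s3 x = 0 → ua ≤ x)
    (hua1 : s1 ≤ ua) (hua2 : ua < 1 / 3)
    (E2 : ℝ → ℝ) (hE2 : ∀ t : ℝ, E2 t = s2 * (ua / s2) / (ua / s2 + t * (1 - ua / s2))) :
    (∀ q ∈ Set.Icc (0 : ℝ) 1, 3 * ua - 2 * E2 q > 0) ∧
    (∀ p q : ℝ, 0 ≤ p → p < q → q ≤ 1 → ∀ lam : ℝ,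
      1 - lam * (2 - lam) * ((E2 p / E2 q) * ((2 * ua - E2 p) / (2 * ua - E2 q))) > 0) ∧
    (∀ p ∈ Set.Icc (0 : ℝ) 1, ∀ lam : ℝ, lam ≠ 1 →
      1 - lam * (2 - lam) * ((E2 p / E2 p) * ((2 * ua - E2 p) / (2 * ua - E2 p))) > 0) :=
  statement11_general s1 s2 s3 ua hs1 hs12 hs23 hsum hua hua1 hua2 E2 hE2
end
end
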